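/- arXiv:2505.15496 — 5 statements merged into one kernel-verified Lean document; each statement's English description precedes it below -/
import Mathlib

section
/- Unboundedness of the multi-task kl moment generating function in the unbalanced setting: Let n ≥ 1 and m_1,…,m_n ≥ 1 be integers and m_min = min_i m_i. For μ ∈ (0,1), let X_{i,j}, i = 1,…,n, j = 1,…,m_i, be i.i.d. Bernoulli(μ) random variables and set μ̂ = (1/n) Σ_{i=1}^n (1/m_i) Σ_{j=1}^{m_i} X_{i,j} and M_μ(λ) = E[ exp( n λ kl(μ̂ | μ) ) ] ∈ [0,∞]. Then for every λ > m_min, sup_{0 < μ < 1} M_μ(λ) = +∞; in particular, there is no finite bound on M_μ(λ) depending only on n and m_1,…,m_n whenever λ > m_min. -/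
open MeasureTheory ProbabilityTheory
open scoped ENNReal NNReal Classical

noncomputable section

/-- Binary Kullback-Leibler divergence `kl(q|p)` with values in `[0,∞]`
(with the conventions `0 log 0 = 0` and `kl(q|p) = ∞` when `p ∈ {0,1}` and `q ≠ p`). -/
def klBin (q p : ℝ) : ℝ≥0∞ :=
  if (p = 0 ∧ q ≠ 0) ∨ (p = 1 ∧ q ≠ 1) then ⊤
  else ENNReal.ofReal (q * Real.log (q / p) + (1 - q) * Real.log ((1 - q) / (1 - p)))

/-- Real-valued binary KL divergence (finite and equal to `klBin` whenever `0 < p < 1`). -/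
def klReal (q p : ℝ) : ℝ :=
  q * Real.log (q / p) + (1 - q) * Real.log ((1 - q) / (1 - p))

/-- Kullback-Leibler divergence between two measures, with values in `[0,∞]`
(`∞` when absolute continuity fails or `log (dμ/dν)` is not `μ`-integrable). -/
def KLdiv {α : Type*} [MeasurableSpace α] (μ ν : Measure α) : ℝ≥0∞ :=
  if μ ≪ ν ∧ Integrable (fun x => Real.log ((μ.rnDeriv ν x).toReal)) μ then
    ENNReal.ofReal (∫ x, Real.log ((μ.rnDeriv ν x).toReal) ∂μ)
  else ⊤

/-- The prior process `𝔓`: sample a prior `P` from the hyper-prior, then `f₁,…,fₙ`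
i.i.d. from `P`. -/
def priorProc {F : Type*} [MeasurableSpace F] (Pri : Measure (Measure F)) (n : ℕ) :
    Measure (Measure F × (Fin n → F)) :=
  Pri.bind fun P => (Measure.dirac P).prod (Measure.pi fun _ : Fin n => P)

/-- `exp` extended to `[0,∞]`. -/
def expENN (x : ℝ≥0∞) : ℝ≥0∞ := if x = ⊤ then ⊤ else ENNReal.ofReal (Real.exp x.toReal)

/-- Bernoulli measure on `Bool` with mean `μ`. -/
def bernB (μ : ℝ) : Measure Bool :=
  ENNReal.ofReal μ • Measure.dirac true + ENNReal.ofReal (1 - μ) • Measure.dirac false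

/-- Bernoulli measure on `ℝ` with mean `μ`. -/
def bernR (μ : ℝ) : Measure ℝ :=
  ENNReal.ofReal μ • Measure.dirac 1 + ENNReal.ofReal (1 - μ) • Measure.dirac 0

/-- `Φ_a(p) = -(1/a) log(1 - p + p e^{-a})`. -/
def Phi (a p : ℝ) : ℝ := -(1 / a) * Real.log (1 - p + p * Real.exp (-a))

/-- The binomial distribution `B(t, p)`, as a measure on `ℝ`. -/
def binomR (t : ℕ) (p : ℝ) : Measure ℝ :=
  ∑ k ∈ Finset.range (t + 1),
    ENNReal.ofReal ((t.choose k) * p ^ k * (1 - p) ^ (t - k)) • Measure.dirac (k : ℝ)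

/-- The distribution of one task `(D, S)` with `S ∼ D^{⊗m}`, when `(D, m) ∼ τDm`. -/
def taskMeasure {Z : Type*} [MeasurableSpace Z] (τDm : Measure (Measure Z × ℕ)) :
    Measure (Measure Z × (Σ k : ℕ, Fin k → Z)) :=
  τDm.bind fun p =>
    (Measure.dirac p.1).prod (Measure.map (Sigma.mk p.2) (Measure.pi fun _ : Fin p.2 => p.1))

/-- Numeric inverse of the vector-valued kl bound:
`kl⁻¹_{m₁,…,mₙ}(q₁,…,qₙ | b) = sup {(1/n) ∑ pᵢ : pᵢ ∈ [0,1], ∑ mᵢ kl(qᵢ|pᵢ) ≤ b}`. -/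
def klInvVec {n : ℕ} (m : Fin n → ℕ) (q : Fin n → ℝ) (b : ℝ≥0∞) : ℝ :=
  sSup ((fun p : Fin n → ℝ => (n : ℝ)⁻¹ * ∑ i, p i) ''
    {p | (∀ i, p i ∈ Set.Icc (0 : ℝ) 1) ∧ (∑ i, (m i : ℝ≥0∞) * klBin (q i) (p i)) ≤ b})

/-- Numeric inverse of the scalar kl bound:
`kl⁻¹_m(q | b) = sup {p ∈ [0,1] : m · kl(q|p) ≤ b}`. -/
def klInv1 (m : ℝ) (q : ℝ) (b : ℝ≥0∞) : ℝ :=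
  sSup {p : ℝ | p ∈ Set.Icc (0 : ℝ) 1 ∧ ENNReal.ofReal m * klBin q p ≤ b}

/-- Numeric inverse of the vector-valued Catoni-style bound:
`Φ⁻¹_{m₁,…,mₙ}(q₁,…,qₙ | b, λ) = sup {(1/n) ∑ pᵢ : pᵢ ∈ [0,1],
  -∑ mᵢ log(1 - pᵢ + pᵢ e^{-λᵢ/(n mᵢ)}) ≤ (1/n) ∑ λᵢ qᵢ + b}`. -/
def PhiInvVec {n : ℕ} (m : Fin n → ℕ) (q : Fin n → ℝ) (b : ℝ≥0∞) (lam : Fin n → ℝ) : ℝ :=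
  sSup ((fun p : Fin n → ℝ => (n : ℝ)⁻¹ * ∑ i, p i) ''
    {p | (∀ i, p i ∈ Set.Icc (0 : ℝ) 1) ∧
      ENNReal.ofReal
        ((-(∑ i, (m i : ℝ) * Real.log (1 - p i + p i * Real.exp (-(lam i) / (n * m i))))) -
          (n : ℝ)⁻¹ * ∑ i, lam i * q i) ≤ b})

/-- Numeric inverse of the scalar Catoni-style bound:
`Φ⁻¹_m(q | b, λ) = sup {p ∈ [0,1] : -m log(1 - p + p e^{-λ/m}) ≤ λ q + b}`. -/
def PhiInv1 (m : ℝ) (q : ℝ) (b : ℝ≥0∞) (lam : ℝ) : ℝ :=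
  sSup {p : ℝ | p ∈ Set.Icc (0 : ℝ) 1 ∧
    ENNReal.ofReal ((-(m * Real.log (1 - p + p * Real.exp (-lam / m)))) - lam * q) ≤ b}

/-
Let `i₀` be a task with the fewest samples and look at the single outcome in which task `i₀` sees
only zeros and every other task only ones. It has probability `(1-μ)^{m_{i₀}} μ^M`, and there
`μ̂ ≤ 1 - 1/n`, so the `-log(1-μ)` part of `nλ kl(μ̂|μ)` has coefficient `nλ(1-μ̂) ≥ λ`. Hence
`M_μ(λ) ≥ C (1-μ)^{m_{i₀} - λ} → ∞` as `μ → 1`.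
-/

open Filter Topology

instance (μ : ℝ) : IsFiniteMeasure (bernB μ) := by
  constructor
  simp [bernB]

lemma bernB_singleton (μ : ℝ) (b : Bool) :
    bernB μ {b} = if b then ENNReal.ofReal μ else ENNReal.ofReal (1 - μ) := by
  cases b <;> simp [bernB]

lemma mul_log_div_eq_mul_sub (x : ℝ) {y : ℝ} (hy : y ≠ 0) :
    x * Real.log (x / y) = x * (Real.log x - Real.log y) := by
  rcases eq_or_ne x 0 with rfl | hx
  · simp
  · rw [Real.log_div hx hy]

lemma tendsto_log_one_sub_nhdsLT_one :
    Tendsto (fun μ : ℝ => Real.log (1 - μ)) (𝓝[<] 1) atBot := by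
  refine Real.tendsto_log_nhdsGT_zero.comp ?_
  have hmaps : Set.MapsTo (fun μ : ℝ => 1 - μ) (Set.Iio 1) (Set.Ioi 0) :=
    fun μ hμ => sub_pos.2 (Set.mem_Iio.1 hμ)
  simpa using ((continuous_sub_left (1 : ℝ)).continuousWithinAt (x := 1)).tendsto_nhdsWithin hmaps

lemma tendsto_mul_klReal_add_mul_log {q a c : ℝ} (b : ℝ) (h : a < c * (1 - q)) :
    Tendsto (fun μ => c * klReal q μ + a * Real.log (1 - μ) + b * Real.log μ) (𝓝[<] 1) atTop := by
  set g : ℝ → ℝ := fun μ => c * q * (Real.log q - Real.log μ) + c * (1 - q) * Real.log (1 - q)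
    + b * Real.log μ
  have hg : Tendsto g (𝓝[<] 1) (𝓝 (g 1)) :=
    (ContinuousAt.tendsto (by fun_prop (disch := norm_num))).mono_left nhdsWithin_le_nhds
  have hsplit : g =ᶠ[𝓝[<] 1] fun μ => c * klReal q μ + a * Real.log (1 - μ) + b * Real.log μ -
      (a - c * (1 - q)) * Real.log (1 - μ) := by
    filter_upwards [Ioo_mem_nhdsLT (zero_lt_one' ℝ)] with μ hμ
    simp only [g, klReal, mul_log_div_eq_mul_sub q hμ.1.ne',
      mul_log_div_eq_mul_sub (1 - q) (sub_pos.2 hμ.2).ne']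
    ring
  refine (hg.add_atTop
    (tendsto_log_one_sub_nhdsLT_one.const_mul_atBot_of_neg (sub_neg.2 h))).congr' ?_
  filter_upwards [hsplit] with μ hμ
  simp only [hμ]; ring

lemma biSup_eq_top_of_tendsto_atTop {α : Type*} {l : Filter α} [l.NeBot] {s : Set α} (hs : s ∈ l)
    {F : α → ℝ≥0∞} {g : α → ℝ} (hg : Tendsto g l atTop)
    (hF : ∀ x ∈ s, ENNReal.ofReal (g x) ≤ F x) : ⨆ x ∈ s, F x = ⊤ := by
  refine top_le_iff.1 (le_of_tendsto (ENNReal.tendsto_ofReal_atTop.comp hg) ?_)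
  filter_upwards [hs] with x hx
  exact (hF x hx).trans (le_biSup F hx)

lemma mul_measure_singleton_le_lintegral {α : Type*} [MeasurableSpace α]
    [MeasurableSingletonClass α] (P : Measure α) (f : α → ℝ≥0∞) (a : α) :
    f a * P {a} ≤ ∫⁻ x, f x ∂P := by
  rw [← lintegral_singleton]
  exact setLIntegral_le_lintegral _ _

lemma inv_mul_sum_ite_le_one {k : ℕ} (ω : Fin k → Bool) :
    (k : ℝ)⁻¹ * ∑ j, (if ω j then (1 : ℝ) else 0) ≤ 1 := by
  rcases Nat.eq_zero_or_pos k with rfl | hk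
  · simp
  · rw [inv_mul_le_one₀ (by positivity)]
    calc ∑ j, (if ω j then (1 : ℝ) else 0) ≤ ∑ _j : Fin k, (1 : ℝ) :=
          Finset.sum_le_sum fun _ _ => by split_ifs <;> norm_num
      _ = k := by simp

lemma pi_bernB_singleton_indicator {ι : Type*} [Fintype ι] [DecidableEq ι] (m : ι → ℕ) (i₀ : ι)
    {μ : ℝ} (hμ₀ : 0 ≤ μ) (hμ₁ : μ ≤ 1) :
    (Measure.pi fun i => Measure.pi fun _ : Fin (m i) => bernB μ) {fun i _ => decide (i ≠ i₀)} =
      ENNReal.ofReal ((1 - μ) ^ m i₀ * μ ^ ∑ i ∈ {i₀}ᶜ, m i) := by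
  simp only [Measure.pi_singleton, bernB_singleton, decide_not, Finset.prod_const,
    Finset.card_univ, Fintype.card_fin]
  rw [Fintype.prod_eq_mul_prod_compl i₀, Finset.prod_congr rfl fun i hi => by
    rw [if_pos (by simpa using Finset.mem_compl.1 hi)], Finset.prod_pow_eq_pow_sum]
  simp [ENNReal.ofReal_mul, ENNReal.ofReal_pow, hμ₀, sub_nonneg.2 hμ₁]

lemma one_le_mul_one_sub_mean_indicator {n : ℕ} (m : Fin n → ℕ) (i₀ : Fin n) :
    1 ≤ (n : ℝ) * (1 - (n : ℝ)⁻¹ * ∑ i, (m i : ℝ)⁻¹ *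
      ∑ _j : Fin (m i), (if decide (i ≠ i₀) then (1 : ℝ) else 0)) := by
  have hn : (n : ℝ) ≠ 0 := Nat.cast_ne_zero.2 (Fin.pos i₀).ne'
  rw [mul_sub, mul_one, ← mul_assoc, mul_inv_cancel₀ hn, one_mul, Fintype.sum_eq_add_sum_compl i₀]
  have hcompl : ∑ i ∈ ({i₀}ᶜ : Finset (Fin n)), (m i : ℝ)⁻¹ *
      ∑ _j : Fin (m i), (if decide (i ≠ i₀) then (1 : ℝ) else 0) ≤ n - 1 := by
    calc _ ≤ ∑ i ∈ ({i₀}ᶜ : Finset (Fin n)), (1 : ℝ) :=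
          Finset.sum_le_sum fun i _ => inv_mul_sum_ite_le_one _
      _ = n - 1 := by simp [Finset.card_compl, Nat.cast_pred (Fin.pos i₀)]
  simp only [ne_eq, not_true_eq_false, decide_false, Bool.false_eq_true, ↓reduceIte,
    Finset.sum_const_zero, mul_zero, zero_add]
  linarith

theorem stmt1_general {n : ℕ} (hn : 1 ≤ n) (m : Fin n → ℕ)
    (lam : ℝ) (hlam : (⨅ i, (m i : ℝ)) < lam) :
    (⨆ μ ∈ Set.Ioo (0 : ℝ) 1,
        ∫⁻ ω, ENNReal.ofReal (Real.exp ((n : ℝ) * lam *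
            klReal ((n : ℝ)⁻¹ * ∑ i, (m i : ℝ)⁻¹ * ∑ j, (if ω i j then (1 : ℝ) else 0)) μ))
          ∂(Measure.pi fun i => Measure.pi fun _ : Fin (m i) => bernB μ)) = ⊤ := by
  have hne : Nonempty (Fin n) := ⟨⟨0, hn⟩⟩
  obtain ⟨i₀, hi₀⟩ := exists_eq_ciInf_of_finite (f := fun i => (m i : ℝ))
  set ω₀ : (i : Fin n) → Fin (m i) → Bool := fun i _ => decide (i ≠ i₀)
  set q := (n : ℝ)⁻¹ * ∑ i, (m i : ℝ)⁻¹ * ∑ j, (if ω₀ i j then (1 : ℝ) else 0)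
  set M := ∑ i ∈ {i₀}ᶜ, m i
  have hq : 1 ≤ n * (1 - q) := one_le_mul_one_sub_mean_indicator m i₀
  have hlam₀ : (m i₀ : ℝ) < lam := hi₀ ▸ hlam
  have hlim := tendsto_mul_klReal_add_mul_log (q := q) (a := m i₀) (c := n * lam) M
    (by linarith [mul_le_mul_of_nonneg_left hq (hlam₀.le.trans' (Nat.cast_nonneg _))])
  refine biSup_eq_top_of_tendsto_atTop (Ioo_mem_nhdsLT zero_lt_one)
    (Real.tendsto_exp_atTop.comp hlim) fun μ hμ => ?_
  have hexp : Real.exp (n * lam * klReal q μ + m i₀ * Real.log (1 - μ) + M * Real.log μ) =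
      Real.exp (n * lam * klReal q μ) * ((1 - μ) ^ m i₀ * μ ^ M) := by
    rw [Real.exp_add, Real.exp_add, Real.exp_nat_mul, Real.exp_nat_mul,
      Real.exp_log (sub_pos.2 hμ.2), Real.exp_log hμ.1, mul_assoc]
  calc ENNReal.ofReal (Real.exp (n * lam * klReal q μ + m i₀ * Real.log (1 - μ) + M * Real.log μ))
      = ENNReal.ofReal (Real.exp (n * lam * klReal q μ)) *
          (Measure.pi fun i => Measure.pi fun _ : Fin (m i) => bernB μ) {ω₀} := by
        rw [hexp, ENNReal.ofReal_mul (Real.exp_nonneg _),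
          pi_bernB_singleton_indicator m i₀ hμ.1.le hμ.2.le]
    _ ≤ _ := mul_measure_singleton_le_lintegral _ _ ω₀

theorem stmt1 {n : ℕ} (hn : 1 ≤ n) (m : Fin n → ℕ) (hm : ∀ i, 1 ≤ m i)
    (lam : ℝ) (hlam : (⨅ i, (m i : ℝ)) < lam) :
    (⨆ μ ∈ Set.Ioo (0 : ℝ) 1,
        ∫⁻ ω, ENNReal.ofReal (Real.exp ((n : ℝ) * lam *
            klReal ((n : ℝ)⁻¹ * ∑ i, (m i : ℝ)⁻¹ * ∑ j, (if ω i j then (1 : ℝ) else 0)) μ))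
          ∂(Measure.pi fun i => Measure.pi fun _ : Fin (m i) => bernB μ)) = ⊤ :=
  stmt1_general hn m lam hlam

end
end

section
/- Fast-rate Catoni-style bound for task-centric unbalanced multi-task learning: For any fixed hyper-prior 𝒫, any δ > 0 and any fixed λ_1,…,λ_n > 0, with probability at least 1 − δ over the sampling of the training datasets S_1,…,S_n it holds for all hyper-posteriors 𝔮 and all posteriors Q_1,…,Q_n that − Σ_{i=1}^n m_i · log( 1 − er_i(Q_i) + er_i(Q_i) · e^{−λ_i/(n m_i)} ) ≤ (1/n) Σ_{i=1}^n λ_i · ĥer_i(Q_i) + KL(𝔔‖𝔓) + log(1/δ). -/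
open MeasureTheory ProbabilityTheory
open scoped ENNReal NNReal Classical

noncomputable section

/-!
For fixed models `f₁, …, fₙ`, convexity of `exp` gives `𝔼 exp (-a ℓ) ≤ 1 - p + p e^{-a}` for every
single sample, so the Catoni exponent
`∑ᵢ (mᵢ · catoniFun aᵢ (erᵢ fᵢ) - aᵢ ∑ⱼ ℓᵢ fᵢ zᵢⱼ)`, with `aᵢ = λᵢ / (n mᵢ)`,
has exponential moment at most `1` over the independent samples. After averaging over the prior
process `𝔓` (Fubini) and applying Markov's inequality, with probability at least `1 - δ` its
exponential `𝔓`-moment is at most `1 / δ`. On that event the Donsker–Varadhan inequality bounds its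
mean under `𝔔` by `KL(𝔔‖𝔓) + log (1 / δ)`, simultaneously for all `𝔔`, and Jensen's inequality for
the convex function `catoniFun aᵢ` moves the mean over `Qᵢ` inside.
-/
open Real Set Function

/-- `catoniFun a p = -log 𝔼[exp (-a X)]` for `X ∼ Bernoulli(p)`, i.e. `a * Phi a p`. -/
def catoniFun (a p : ℝ) : ℝ := -log (1 - p + p * exp (-a))

lemma exp_neg_mul_le_one_sub_add_mul_exp {a l : ℝ} (hl : l ∈ Icc (0 : ℝ) 1) :
    exp (-(a * l)) ≤ 1 - l + l * exp (-a) := by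
  have h := convexOn_exp.2 (mem_univ 0) (mem_univ (-a)) (sub_nonneg.2 hl.2) hl.1 (by ring)
  rw [show -(a * l) = (1 - l) * 0 + l * -a by ring]
  simpa using h

lemma one_sub_add_mul_exp_pos {a p : ℝ} (hp : p ∈ Icc (0 : ℝ) 1) :
    0 < 1 - p + p * exp (-a) :=
  (exp_pos _).trans_le (exp_neg_mul_le_one_sub_add_mul_exp hp)

lemma abs_catoniFun_le (a : ℝ) {p : ℝ} (hp : p ∈ Icc (0 : ℝ) 1) : |catoniFun a p| ≤ |a| := by
  have hC := one_sub_add_mul_exp_pos (a := a) hp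
  obtain ⟨hp0, hp1⟩ := hp
  rw [catoniFun, abs_neg]
  rcases le_total 0 a with ha | ha
  · have hlo : exp (-a) ≤ 1 - p + p * exp (-a) := by nlinarith [exp_le_one_iff.2 (neg_nonpos.2 ha)]
    have hhi : 1 - p + p * exp (-a) ≤ 1 := by nlinarith [exp_le_one_iff.2 (neg_nonpos.2 ha)]
    rw [abs_of_nonneg ha, abs_le]
    constructor
    · simpa using log_le_log (exp_pos _) hlo
    · linarith [log_nonpos hC.le hhi]
  · have hlo : 1 ≤ 1 - p + p * exp (-a) := by nlinarith [one_le_exp (neg_nonneg.2 ha)]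
    have hhi : 1 - p + p * exp (-a) ≤ exp (-a) := by nlinarith [one_le_exp (neg_nonneg.2 ha)]
    rw [abs_of_nonpos ha, abs_le]
    constructor
    · linarith [log_nonneg hlo]
    · simpa using log_le_log hC hhi

lemma convexOn_catoniFun (a : ℝ) : ConvexOn ℝ (Icc 0 1) (catoniFun a) := by
  have hline : ∀ y, AffineMap.lineMap (1 : ℝ) (exp (-a)) y = 1 - y + y * exp (-a) := fun y => by
    simp [AffineMap.lineMap_apply]; ring
  have hconc := (strictConcaveOn_log_Ioi.concaveOn.comp_affineMap
    (AffineMap.lineMap (1 : ℝ) (exp (-a)))).subset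
    (fun y hy => by simpa [hline] using one_sub_add_mul_exp_pos hy) (convex_Icc 0 1)
  exact (hconc.congr fun y _ => by simp [hline]).neg

lemma continuousOn_catoniFun (a : ℝ) : ContinuousOn (catoniFun a) (Icc 0 1) :=
  (continuousOn_log.comp (by fun_prop) fun _ hy => (one_sub_add_mul_exp_pos hy).ne').neg

lemma measurable_catoniFun (a : ℝ) : Measurable (catoniFun a) := by
  unfold catoniFun; fun_prop

lemma integrable_of_mem_Icc {α : Type*} [MeasurableSpace α] {μ : Measure α} [IsFiniteMeasure μ]
    {f : α → ℝ} (hf : Measurable f) (hf01 : ∀ x, f x ∈ Icc (0 : ℝ) 1) : Integrable f μ :=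
  .of_bound hf.aestronglyMeasurable 1 (ae_of_all _ fun x => by
    rw [norm_eq_abs, abs_le]; exact ⟨by linarith [(hf01 x).1], (hf01 x).2⟩)

lemma integral_mem_Icc {α : Type*} [MeasurableSpace α] {μ : Measure α} [IsProbabilityMeasure μ]
    {f : α → ℝ} (hf : Measurable f) (hf01 : ∀ x, f x ∈ Icc (0 : ℝ) 1) :
    ∫ x, f x ∂μ ∈ Icc (0 : ℝ) 1 :=
  ⟨integral_nonneg fun x => (hf01 x).1, by
    simpa using integral_mono (integrable_of_mem_Icc hf hf01) (integrable_const (μ := μ) 1)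
      fun x => (hf01 x).2⟩

lemma catoniFun_integral_le {α : Type*} [MeasurableSpace α] (μ : Measure α)
    [IsProbabilityMeasure μ] (a : ℝ) {p : α → ℝ} (hp : Measurable p)
    (hp01 : ∀ x, p x ∈ Icc (0 : ℝ) 1) :
    catoniFun a (∫ x, p x ∂μ) ≤ ∫ x, catoniFun a (p x) ∂μ :=
  (convexOn_catoniFun a).map_integral_le (continuousOn_catoniFun a) isClosed_Icc
    (ae_of_all _ hp01) (integrable_of_mem_Icc hp hp01)
    (.of_bound ((measurable_catoniFun a).comp hp).aestronglyMeasurable |a|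
      (ae_of_all _ fun x => abs_catoniFun_le a (hp01 x)))

lemma integral_exp_neg_mul_le {Z : Type*} [MeasurableSpace Z] (D : Measure Z)
    [IsProbabilityMeasure D] {ℓ : Z → ℝ} (hℓ : Measurable ℓ) (hℓ01 : ∀ z, ℓ z ∈ Icc (0 : ℝ) 1)
    (a : ℝ) : ∫ z, exp (-(a * ℓ z)) ∂D ≤ exp (-catoniFun a (∫ z, ℓ z ∂D)) := by
  have hℓint := integrable_of_mem_Icc (μ := D) hℓ hℓ01
  rw [catoniFun, neg_neg, exp_log (one_sub_add_mul_exp_pos (integral_mem_Icc hℓ hℓ01))]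
  calc ∫ z, exp (-(a * ℓ z)) ∂D ≤ ∫ z, (1 - ℓ z + ℓ z * exp (-a)) ∂D :=
        integral_mono_of_nonneg (ae_of_all _ fun _ => (exp_pos _).le)
          (((integrable_const 1).sub hℓint).add (hℓint.mul_const _))
          (ae_of_all _ fun z => exp_neg_mul_le_one_sub_add_mul_exp (hℓ01 z))
    _ = 1 - ∫ z, ℓ z ∂D + (∫ z, ℓ z ∂D) * exp (-a) := by
        rw [integral_add (f := fun z => 1 - ℓ z) ((integrable_const 1).sub hℓint)
            (hℓint.mul_const _),
          integral_sub (integrable_const 1) hℓint, integral_mul_const]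
        simp

def catoniExponent {F Z : Type*} [MeasurableSpace Z] (D : Measure Z) (ℓ : F → Z → ℝ) (k : ℕ)
    (a : ℝ) (f : F) (s : Fin k → Z) : ℝ :=
  k * catoniFun a (∫ z, ℓ f z ∂D) - a * ∑ j, ℓ f (s j)

section catoniExponent

variable {F Z : Type*} [MeasurableSpace F] [MeasurableSpace Z] {D : Measure Z}
  [IsProbabilityMeasure D] {ℓ : F → Z → ℝ}

lemma measurable_integral_loss (hℓ : Measurable (uncurry ℓ)) : Measurable fun f => ∫ z, ℓ f z ∂D :=
  (hℓ.stronglyMeasurable.integral_prod_right' (ν := D)).measurable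

lemma integral_loss_mem_Icc (hℓ : Measurable (uncurry ℓ)) (hℓ01 : ∀ f z, ℓ f z ∈ Icc (0 : ℝ) 1)
    (f : F) : ∫ z, ℓ f z ∂D ∈ Icc (0 : ℝ) 1 :=
  integral_mem_Icc (hℓ.comp measurable_prodMk_left) (hℓ01 f)

lemma Measurable.catoniExponent {α : Type*} [MeasurableSpace α] {f : α → F} {k : ℕ}
    {s : α → Fin k → Z} (hf : Measurable f) (hs : Measurable s) (hℓ : Measurable (uncurry ℓ))
    (a : ℝ) : Measurable fun x => catoniExponent D ℓ k a (f x) (s x) := by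
  unfold _root_.catoniExponent
  exact (((measurable_catoniFun a).comp ((measurable_integral_loss hℓ).comp hf)).const_mul _).sub
    ((Finset.measurable_sum _ fun j _ =>
      hℓ.comp (hf.prodMk ((measurable_pi_apply j).comp hs))).const_mul _)

lemma abs_catoniExponent_le (hℓ : Measurable (uncurry ℓ)) (hℓ01 : ∀ f z, ℓ f z ∈ Icc (0 : ℝ) 1)
    (k : ℕ) (a : ℝ) (f : F) (s : Fin k → Z) : |catoniExponent D ℓ k a f s| ≤ 2 * k * |a| := by
  have hfun : |catoniFun a (∫ z, ℓ f z ∂D)| ≤ |a| :=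
    abs_catoniFun_le a (integral_loss_mem_Icc hℓ hℓ01 f)
  have hsum : |∑ j, ℓ f (s j)| ≤ k := by
    rw [abs_of_nonneg (Finset.sum_nonneg fun j _ => (hℓ01 f (s j)).1)]
    calc ∑ j, ℓ f (s j) ≤ ∑ _j : Fin k, (1 : ℝ) := Finset.sum_le_sum fun j _ => (hℓ01 f (s j)).2
      _ = k := by simp
  calc |catoniExponent D ℓ k a f s|
      ≤ |k * catoniFun a (∫ z, ℓ f z ∂D)| + |a * ∑ j, ℓ f (s j)| := abs_sub _ _
    _ = k * |catoniFun a (∫ z, ℓ f z ∂D)| + |a| * |∑ j, ℓ f (s j)| := by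
        rw [abs_mul, abs_mul, Nat.abs_cast]
    _ ≤ k * |a| + |a| * k := by gcongr
    _ = 2 * k * |a| := by ring

lemma integrable_catoniExponent (Q : Measure F) [IsFiniteMeasure Q] (hℓ : Measurable (uncurry ℓ))
    (hℓ01 : ∀ f z, ℓ f z ∈ Icc (0 : ℝ) 1) (k : ℕ) (a : ℝ) (s : Fin k → Z) :
    Integrable (fun f => catoniExponent D ℓ k a f s) Q :=
  .of_bound (measurable_id.catoniExponent measurable_const hℓ a).aestronglyMeasurable _
    (ae_of_all _ fun f => abs_catoniExponent_le hℓ hℓ01 k a f s)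

lemma integral_exp_catoniExponent_le_one (hℓ : Measurable (uncurry ℓ))
    (hℓ01 : ∀ f z, ℓ f z ∈ Icc (0 : ℝ) 1) (k : ℕ) (a : ℝ) (f : F) :
    ∫ s, exp (catoniExponent D ℓ k a f s) ∂(Measure.pi fun _ : Fin k => D) ≤ 1 := by
  set c := catoniFun a (∫ z, ℓ f z ∂D)
  have hsplit : ∀ s : Fin k → Z,
      exp (catoniExponent D ℓ k a f s) = exp (k * c) * ∏ j, exp (-(a * ℓ f (s j))) := fun s => by
    rw [catoniExponent, sub_eq_add_neg, exp_add, Finset.mul_sum, ← Finset.sum_neg_distrib,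
      exp_sum]
  simp_rw [hsplit]
  rw [integral_const_mul, integral_fintype_prod_eq_pow fun z => exp (-(a * ℓ f z)),
    Fintype.card_fin]
  calc exp (k * c) * (∫ z, exp (-(a * ℓ f z)) ∂D) ^ k ≤ exp (k * c) * exp (-c) ^ k := by
        gcongr
        exact integral_exp_neg_mul_le D (hℓ.comp measurable_prodMk_left) (hℓ01 f) a
    _ = 1 := by rw [← exp_nat_mul, ← exp_add]; simp

lemma catoniExponent_integral_le_integral (Q : Measure F) [IsProbabilityMeasure Q]
    (hℓ : Measurable (uncurry ℓ)) (hℓ01 : ∀ f z, ℓ f z ∈ Icc (0 : ℝ) 1) (k : ℕ) (a : ℝ)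
    (s : Fin k → Z) :
    k * catoniFun a (∫ f, ∫ z, ℓ f z ∂D ∂Q) - a * ∑ j, ∫ f, ℓ f (s j) ∂Q ≤
      ∫ f, catoniExponent D ℓ k a f s ∂Q := by
  have hℓint : ∀ j, Integrable (fun f => ℓ f (s j)) Q := fun j =>
    integrable_of_mem_Icc (hℓ.comp measurable_prodMk_right) fun f => hℓ01 f (s j)
  have hfunint : Integrable (fun f => catoniFun a (∫ z, ℓ f z ∂D)) Q :=
    .of_bound ((measurable_catoniFun a).comp (measurable_integral_loss hℓ)).aestronglyMeasurable
      |a| (ae_of_all _ fun f => abs_catoniFun_le a (integral_loss_mem_Icc hℓ hℓ01 f))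
  simp only [catoniExponent]
  rw [integral_sub (hfunint.const_mul _) ((integrable_finsetSum _ fun j _ => hℓint j).const_mul _),
    integral_const_mul, integral_const_mul, integral_finsetSum _ fun j _ => hℓint j]
  gcongr
  exact catoniFun_integral_le Q a (measurable_integral_loss hℓ) (integral_loss_mem_Icc hℓ hℓ01)

end catoniExponent

lemma integral_exp_sum_le_one {ι : Type*} [Fintype ι] {E : ι → Type*}
    [∀ i, MeasurableSpace (E i)] (μ : ∀ i, Measure (E i)) [∀ i, SigmaFinite (μ i)]
    (h : ∀ i, E i → ℝ) (hh : ∀ i, ∫ x, exp (h i x) ∂μ i ≤ 1) :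
    ∫ x, exp (∑ i, h i (x i)) ∂Measure.pi μ ≤ 1 := by
  simp_rw [exp_sum]
  rw [integral_fintype_prod_eq_prod fun i x => exp (h i x)]
  exact Finset.prod_le_one (fun i _ => integral_nonneg fun _ => (exp_pos _).le) fun i _ => hh i

lemma integral_prod_pi_sum_eval {X ι : Type*} [MeasurableSpace X] [Fintype ι] {E : ι → Type*}
    [∀ i, MeasurableSpace (E i)] (ρ : Measure X) [IsProbabilityMeasure ρ]
    (Q : ∀ i, Measure (E i)) [∀ i, IsProbabilityMeasure (Q i)] {h : ∀ i, E i → ℝ}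
    (hh : ∀ i, Integrable (h i) (Q i)) :
    ∫ ω, ∑ i, h i (ω.2 i) ∂(ρ.prod (Measure.pi Q)) = ∑ i, ∫ x, h i x ∂Q i := by
  have hmp : ∀ i, MeasurePreserving (fun ω : X × (∀ i, E i) => ω.2 i)
      (ρ.prod (Measure.pi Q)) (Q i) := fun i =>
    (measurePreserving_eval Q i).comp measurePreserving_snd
  calc ∫ ω, ∑ i, h i (ω.2 i) ∂(ρ.prod (Measure.pi Q))
      = ∑ i, ∫ ω, h i (ω.2 i) ∂(ρ.prod (Measure.pi Q)) :=
        integral_finsetSum _ fun i _ => (hmp i).integrable_comp_of_integrable (hh i)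
    _ = ∑ i, ∫ x, h i x ∂Q i := Finset.sum_congr rfl fun i _ => by
        rw [← integral_map (hmp i).measurable.aemeasurable, (hmp i).map_eq]
        exact (hmp i).map_eq ▸ (hh i).aestronglyMeasurable

lemma priorProc_apply_univ_le_one {F : Type*} [MeasurableSpace F] (Pri : Measure (Measure F))
    [IsProbabilityMeasure Pri] (hPri : ∀ᵐ P ∂Pri, IsProbabilityMeasure P) (n : ℕ) :
    priorProc Pri n univ ≤ 1 := by
  refine (Measure.bind_apply_le _ MeasurableSet.univ).trans_eq ?_
  rw [lintegral_congr_ae (g := fun _ => 1) (hPri.mono fun _ _ => measure_univ)]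
  simp

lemma ofReal_integral_sub_log_le_KLdiv {α : Type*} [MeasurableSpace α] {μ ν : Measure α}
    [IsProbabilityMeasure μ] [SigmaFinite ν] {G : α → ℝ} (hGm : Measurable G)
    (hGμ : Integrable G μ) {c : ℝ} (hc : 0 < c)
    (hGν : ∫⁻ x, ENNReal.ofReal (exp (G x)) ∂ν ≤ ENNReal.ofReal c) :
    ENNReal.ofReal (∫ x, G x ∂μ - log c) ≤ KLdiv μ ν := by
  unfold KLdiv
  split_ifs with hKL
  swap
  · exact le_top
  obtain ⟨hμν, hllr⟩ := hKL
  have hexp : Integrable (fun x => exp (G x)) ν :=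
    ⟨(measurable_exp.comp hGm).aestronglyMeasurable, by
      rw [hasFiniteIntegral_iff_ofReal (ae_of_all _ fun _ => (exp_pos _).le)]
      exact hGν.trans_lt ENNReal.ofReal_lt_top⟩
  have : NeZero ν := ⟨fun h => by simpa using hμν (s := univ) (by simp [h])⟩
  have hexp_le : ∫ x, exp (G x) ∂ν ≤ c := by
    rwa [← ENNReal.ofReal_le_ofReal_iff hc.le,
      ofReal_integral_eq_lintegral_ofReal hexp (ae_of_all _ fun _ => (exp_pos _).le)]
  have : IsProbabilityMeasure (ν.tilted G) := isProbabilityMeasure_tilted hexp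
  -- Gibbs' inequality against the tilted measure `ν.tilted G`
  have hgibbs := InformationTheory.integral_llr_add_sub_measure_univ_nonneg
    (hμν.trans (absolutelyContinuous_tilted hexp)) (integrable_llr_tilted_right hμν hGμ hllr hexp)
  rw [integral_llr_tilted_right hμν hGμ hexp hllr] at hgibbs
  simp only [probReal_univ, add_sub_cancel_right] at hgibbs
  have hlog := log_le_log (integral_exp_pos hexp) hexp_le
  refine ENNReal.ofReal_le_ofReal ?_
  change _ ≤ ∫ x, llr μ ν x ∂μ
  linarith

lemma measure_one_div_le_lintegral_exp_le {X Ω : Type*} [MeasurableSpace X] [MeasurableSpace Ω]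
    (μ : Measure X) [SFinite μ] (ν : Measure Ω) [SFinite ν] (hν : ν univ ≤ 1)
    {G : X → Ω → ℝ} (hG : Measurable (uncurry G))
    (hmgf : ∀ ω, ∫⁻ x, ENNReal.ofReal (exp (G x ω)) ∂μ ≤ 1) {δ : ℝ} (hδ : 0 < δ) :
    μ {x | ENNReal.ofReal (1 / δ) ≤ ∫⁻ ω, ENNReal.ofReal (exp (G x ω)) ∂ν} ≤
      ENNReal.ofReal δ := by
  have hmeas : Measurable fun p : X × Ω => ENNReal.ofReal (exp (G p.1 p.2)) :=
    ENNReal.measurable_ofReal.comp (measurable_exp.comp hG)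
  have htotal : ∫⁻ x, ∫⁻ ω, ENNReal.ofReal (exp (G x ω)) ∂ν ∂μ ≤ 1 :=
    calc ∫⁻ x, ∫⁻ ω, ENNReal.ofReal (exp (G x ω)) ∂ν ∂μ
        = ∫⁻ ω, ∫⁻ x, ENNReal.ofReal (exp (G x ω)) ∂μ ∂ν :=
          lintegral_lintegral_swap hmeas.aemeasurable
      _ ≤ ∫⁻ _, 1 ∂ν := lintegral_mono hmgf
      _ ≤ 1 := by simpa using hν
  calc μ {x | ENNReal.ofReal (1 / δ) ≤ ∫⁻ ω, ENNReal.ofReal (exp (G x ω)) ∂ν}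
      ≤ (∫⁻ x, ∫⁻ ω, ENNReal.ofReal (exp (G x ω)) ∂ν ∂μ) / ENNReal.ofReal (1 / δ) :=
        meas_ge_le_lintegral_div hmeas.lintegral_prod_right'.aemeasurable
          (ENNReal.ofReal_pos.2 (by positivity)).ne' ENNReal.ofReal_ne_top
    _ ≤ 1 / ENNReal.ofReal (1 / δ) := by gcongr
    _ = ENNReal.ofReal δ := by rw [one_div δ, ENNReal.ofReal_inv_of_pos hδ, one_div, inv_inv]

theorem measure_KLdiv_lt_integral_sub_log_le {X Ω : Type*} [MeasurableSpace X]
    [MeasurableSpace Ω] (μ : Measure X) [IsProbabilityMeasure μ] (ν : Measure Ω)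
    [IsFiniteMeasure ν] (hν : ν univ ≤ 1) {G : X → Ω → ℝ} (hG : Measurable (uncurry G))
    {B : ℝ} (hB : ∀ x ω, |G x ω| ≤ B) (hmgf : ∀ ω, ∫ x, exp (G x ω) ∂μ ≤ 1)
    (ρ : X → Measure Ω) [∀ x, IsProbabilityMeasure (ρ x)] {δ : ℝ} (hδ : 0 < δ) :
    μ {x | ¬ ENNReal.ofReal (∫ ω, G x ω ∂ρ x - log (1 / δ)) ≤ KLdiv (ρ x) ν} ≤
      ENNReal.ofReal δ := by
  have hlmgf : ∀ ω, ∫⁻ x, ENNReal.ofReal (exp (G x ω)) ∂μ ≤ 1 := fun ω => by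
    have hint : Integrable (fun x => exp (G x ω)) μ :=
      .of_bound (measurable_exp.comp (hG.comp measurable_prodMk_right)).aestronglyMeasurable
        (exp B) (ae_of_all _ fun x => by
          rw [norm_eq_abs, abs_of_pos (exp_pos _)]
          exact exp_le_exp.2 (abs_le.1 (hB x ω)).2)
    rw [← ofReal_integral_eq_lintegral_ofReal hint (ae_of_all _ fun _ => (exp_pos _).le)]
    exact ENNReal.ofReal_le_one.2 (hmgf ω)
  refine (measure_mono fun x hx => ?_).trans
    (measure_one_div_le_lintegral_exp_le μ ν hν hG hlmgf hδ)
  by_contra hW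
  exact hx (ofReal_integral_sub_log_le_KLdiv (hG.comp measurable_prodMk_left)
    (.of_bound (hG.comp measurable_prodMk_left).aestronglyMeasurable B
      (ae_of_all _ fun ω => hB x ω)) (by positivity) (not_le.1 hW).le)

theorem stmt3_general
    {F : Type*} [MeasurableSpace F] {n : ℕ}
    {Z : Fin n → Type*} [∀ i, MeasurableSpace (Z i)]
    (D : ∀ i, Measure (Z i)) [∀ i, IsProbabilityMeasure (D i)]
    (m : Fin n → ℕ)
    (ℓ : ∀ i, F → Z i → ℝ)
    (hℓmeas : ∀ i, Measurable (Function.uncurry (ℓ i)))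
    (hℓ01 : ∀ i f z, ℓ i f z ∈ Set.Icc (0 : ℝ) 1)
    (Pri : Measure (Measure F)) [IsProbabilityMeasure Pri]
    (hPri : ∀ᵐ P ∂Pri, IsProbabilityMeasure P)
    (δ : ℝ) (hδ : 0 < δ)
    (lam : Fin n → ℝ)
    (𝔮 : (∀ i, Fin (m i) → Z i) → Measure (Measure F))
    (Q : (∀ i, Fin (m i) → Z i) → ∀ i : Fin n, Measure F)
    (h𝔮prob : ∀ S, IsProbabilityMeasure (𝔮 S))
    (hQprob : ∀ S i, IsProbabilityMeasure (Q S i)) :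
    (Measure.pi fun i => Measure.pi fun _ : Fin (m i) => D i)
      {S | ¬ (ENNReal.ofReal
            ((-(∑ i, (m i : ℝ) *
                Real.log (1 - (∫ f, (∫ z, ℓ i f z ∂(D i)) ∂(Q S i)) +
                  (∫ f, (∫ z, ℓ i f z ∂(D i)) ∂(Q S i)) * Real.exp (-(lam i) / (n * m i))))) -
              (n : ℝ)⁻¹ * (∑ i, lam i * ((m i : ℝ)⁻¹ * ∑ j, ∫ f, ℓ i f (S i j) ∂(Q S i))) -
              Real.log (1 / δ)) ≤
          KLdiv ((𝔮 S).prod (Measure.pi fun i => Q S i)) (priorProc Pri n))}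
      ≤ ENNReal.ofReal δ := by
  have hprior := priorProc_apply_univ_le_one Pri hPri n
  have : IsFiniteMeasure (priorProc Pri n) := ⟨hprior.trans_lt ENNReal.one_lt_top⟩
  have : ∀ S, IsProbabilityMeasure ((𝔮 S).prod (Measure.pi fun i => Q S i)) := fun S =>
    have := h𝔮prob S
    have := hQprob S
    inferInstance
  let a : Fin n → ℝ := fun i => lam i / (n * m i)
  let G : (∀ i, Fin (m i) → Z i) → Measure F × (Fin n → F) → ℝ :=
    fun S ω => ∑ i, catoniExponent (D i) (ℓ i) (m i) (a i) (ω.2 i) (S i)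
  have hG : Measurable (uncurry G) :=
    Finset.measurable_sum _ fun i _ =>
      ((measurable_pi_apply i).comp (measurable_snd.comp measurable_snd)).catoniExponent
        ((measurable_pi_apply i).comp measurable_fst) (hℓmeas i) (a i)
  have hB : ∀ S ω, |G S ω| ≤ ∑ i, 2 * m i * |a i| := fun S ω =>
    (Finset.abs_sum_le_sum_abs _ _).trans
      (Finset.sum_le_sum fun i _ => abs_catoniExponent_le (hℓmeas i) (hℓ01 i) _ _ _ _)
  have hmgf : ∀ ω, ∫ S, exp (G S ω) ∂(Measure.pi fun i => Measure.pi fun _ : Fin (m i) => D i)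
      ≤ 1 := fun ω =>
    integral_exp_sum_le_one _ _ fun i =>
      integral_exp_catoniExponent_le_one (hℓmeas i) (hℓ01 i) _ _ _
  refine le_trans (measure_mono ?_) (measure_KLdiv_lt_integral_sub_log_le _ _ hprior hG hB hmgf
    (fun S => (𝔮 S).prod (Measure.pi fun i => Q S i)) hδ)
  intro S hS hKL
  refine hS ((ENNReal.ofReal_le_ofReal ?_).trans hKL)
  have := hQprob S
  rw [integral_prod_pi_sum_eval (𝔮 S) (Q S) fun i =>
    integrable_catoniExponent (Q S i) (hℓmeas i) (hℓ01 i) _ _ _]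
  refine sub_le_sub_right (le_of_eq_of_le ?_ (Finset.sum_le_sum fun i _ =>
    catoniExponent_integral_le_integral (Q S i) (hℓmeas i) (hℓ01 i) _ (a i) (S i))) _
  rw [← Finset.sum_neg_distrib, Finset.mul_sum, ← Finset.sum_sub_distrib]
  refine Finset.sum_congr rfl fun i _ => ?_
  rw [catoniFun, neg_div]
  ring

theorem stmt3
    {F : Type*} [MeasurableSpace F] {n : ℕ} (hn : 0 < n)
    {Z : Fin n → Type*} [∀ i, MeasurableSpace (Z i)]
    (D : ∀ i, Measure (Z i)) [∀ i, IsProbabilityMeasure (D i)]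
    (m : Fin n → ℕ) (hm : ∀ i, 0 < m i)
    (ℓ : ∀ i, F → Z i → ℝ)
    (hℓmeas : ∀ i, Measurable (Function.uncurry (ℓ i)))
    (hℓ01 : ∀ i f z, ℓ i f z ∈ Set.Icc (0 : ℝ) 1)
    (Pri : Measure (Measure F)) [IsProbabilityMeasure Pri]
    (hPri : ∀ᵐ P ∂Pri, IsProbabilityMeasure P)
    (δ : ℝ) (hδ : 0 < δ)
    (lam : Fin n → ℝ) (hlam : ∀ i, 0 < lam i)
    (𝔮 : (∀ i, Fin (m i) → Z i) → Measure (Measure F))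
    (Q : (∀ i, Fin (m i) → Z i) → ∀ i : Fin n, Measure F)
    (h𝔮meas : Measurable 𝔮) (hQmeas : ∀ i, Measurable fun S => Q S i)
    (h𝔮prob : ∀ S, IsProbabilityMeasure (𝔮 S))
    (h𝔮prob' : ∀ S, ∀ᵐ P ∂(𝔮 S), IsProbabilityMeasure P)
    (hQprob : ∀ S i, IsProbabilityMeasure (Q S i)) :
    (Measure.pi fun i => Measure.pi fun _ : Fin (m i) => D i)
      {S | ¬ (ENNReal.ofReal
            ((-(∑ i, (m i : ℝ) *
                Real.log (1 - (∫ f, (∫ z, ℓ i f z ∂(D i)) ∂(Q S i)) +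
                  (∫ f, (∫ z, ℓ i f z ∂(D i)) ∂(Q S i)) * Real.exp (-(lam i) / (n * m i))))) -
              (n : ℝ)⁻¹ * (∑ i, lam i * ((m i : ℝ)⁻¹ * ∑ j, ∫ f, ℓ i f (S i j) ∂(Q S i))) -
              Real.log (1 / δ)) ≤
          KLdiv ((𝔮 S).prod (Measure.pi fun i => Q S i)) (priorProc Pri n))}
      ≤ ENNReal.ofReal δ :=
  stmt3_general D m ℓ hℓmeas hℓ01 Pri hPri δ hδ lam 𝔮 Q h𝔮prob hQprob

end
end

section
/- Hoeffding-type product moment bound with harmonic mean: In the multi-task setup, for any fixed probability measure 𝒫 on M(F) and any λ > 0, E_{(S_1,…,S_n) ∼ ⊗_i D_i^{⊗m_i}} [ E_{P∼𝒫} ∏_{i=1}^n E_{f∼P} exp( (λ/n) · ( er_i(f) − ĥer_i(f) ) ) ] ≤ exp( λ² / (8 n m_h) ), where m_h = n / (Σ_{i=1}^n 1/m_i) is the harmonic mean of the sample sizes m_1,…,m_n. -/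
/-! For a fixed model `f`, the per-sample deviations `er_i(f) - ℓ_i(f, z_{i,j})` are independent,
centred and range over an interval of length one, so by Hoeffding's lemma the sample mean of task
`i` is sub-Gaussian with variance proxy `1 / (4 m_i)`, i.e. `E_{S_i} exp (t (er_i(f) - ĥer_i(f))) ≤
exp (t² / (8 m_i))`. Since `P` does not depend on the sample, Tonelli moves `E_S` inside
`E_{P∼𝒫}`; the samples of different tasks being independent, `E_S` of the product over tasks is the
product of the `E_{S_i}`, and each of these moves inside `E_{f∼P}`. With `t = λ / n` the exponents
add up to `λ² / (8 n²) ∑ 1 / m_i = λ² / (8 n m_h)`. -/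

open MeasureTheory ProbabilityTheory
open scoped ENNReal NNReal Classical

noncomputable section

section Hoeffding

variable {Z : Type*} [MeasurableSpace Z] {k : ℕ}

lemma lintegral_exp_mul_sub_sampleMean_le (D : Measure Z) [IsProbabilityMeasure D]
    {h : Z → ℝ} (hh : Measurable h) {a b : ℝ} (hab : ∀ z, h z ∈ Set.Icc a b) (hk : 0 < k)
    (t : ℝ) :
    ∫⁻ s, ENNReal.ofReal (Real.exp (t * ((∫ z, h z ∂D) - (k : ℝ)⁻¹ * ∑ j, h (s j))))
        ∂(Measure.pi fun _ : Fin k => D) ≤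
      ENNReal.ofReal (Real.exp (t ^ 2 * (b - a) ^ 2 / (8 * k))) := by
  set μ := Measure.pi fun _ : Fin k => D
  set X : Fin k → (Fin k → Z) → ℝ := fun j s => (∫ z, h z ∂D) - h (s j)
  have hX : ∀ j ∈ Finset.univ, HasSubgaussianMGF (X j) ((‖b - a‖₊ / 2) ^ 2) μ := by
    intro j _
    have hcoord : HasSubgaussianMGF (fun z => (∫ z, h z ∂D) - h z) ((‖b - a‖₊ / 2) ^ 2)
        (μ.map (Function.eval j)) := by
      rw [(measurePreserving_eval _ j).map_eq]
      convert (hasSubgaussianMGF_of_mem_Icc (μ := D) hh.aemeasurable (ae_of_all _ hab)).neg using 1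
      ext z; simp
    exact HasSubgaussianMGF.of_map (μ := μ) (Y := Function.eval j)
      (measurable_pi_apply j).aemeasurable hcoord
  have hsum := HasSubgaussianMGF.sum_of_iIndepFun
    (iIndepFun_pi (μ := fun _ : Fin k => D) (X := fun _ z => (∫ z, h z ∂D) - h z)
      fun _ => (measurable_const.sub hh).aemeasurable) hX
  have hk' : (k : ℝ) ≠ 0 := by positivity
  have hmean : ∀ s : Fin k → Z, t * ((∫ z, h z ∂D) - (k : ℝ)⁻¹ * ∑ j, h (s j)) =
      t / k * ∑ j, X j s := by
    intro s
    simp only [X, Finset.sum_sub_distrib, Finset.sum_const, Finset.card_univ, Fintype.card_fin,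
      nsmul_eq_mul]
    field_simp
  simp_rw [hmean]
  rw [← ofReal_integral_eq_lintegral_ofReal (hsum.integrable_exp_mul _)
    (ae_of_all _ fun _ => (Real.exp_pos _).le)]
  refine ENNReal.ofReal_le_ofReal ((hsum.mgf_le (t / k)).trans_eq ?_)
  simp only [Finset.sum_const, Finset.card_univ, Fintype.card_fin, nsmul_eq_mul]
  push_cast
  rw [Real.norm_eq_abs, div_pow, sq_abs]
  congr 1
  field_simp
  ring

end Hoeffding

section Tasks

variable {F Z : Type*} [MeasurableSpace F] [MeasurableSpace Z] {k : ℕ}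

def generalizationGap (D : Measure Z) (ℓ : F → Z → ℝ) (f : F) (s : Fin k → Z) : ℝ :=
  (∫ z, ℓ f z ∂D) - (k : ℝ)⁻¹ * ∑ j, ℓ f (s j)

lemma measurable_generalizationGap (D : Measure Z) [SFinite D] {ℓ : F → Z → ℝ}
    (hℓ : Measurable (Function.uncurry ℓ)) :
    Measurable (Function.uncurry (generalizationGap (k := k) D ℓ)) :=
  (hℓ.stronglyMeasurable.integral_prod_right'.measurable.comp measurable_fst).sub
    (measurable_const.mul (Finset.measurable_sum _ fun j _ =>
      hℓ.comp (measurable_fst.prodMk ((measurable_pi_apply j).comp measurable_snd))))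

lemma lintegral_lintegral_exp_mul_generalizationGap_le (D : Measure Z) [IsProbabilityMeasure D]
    (P : Measure F) [IsProbabilityMeasure P] {ℓ : F → Z → ℝ}
    (hℓ : Measurable (Function.uncurry ℓ)) {a b : ℝ} (hab : ∀ f z, ℓ f z ∈ Set.Icc a b)
    (hk : 0 < k) (t : ℝ) :
    ∫⁻ s, ∫⁻ f, ENNReal.ofReal (Real.exp (t * generalizationGap D ℓ f s)) ∂P
        ∂(Measure.pi fun _ : Fin k => D) ≤
      ENNReal.ofReal (Real.exp (t ^ 2 * (b - a) ^ 2 / (8 * k))) := by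
  have hmeas : Measurable (Function.uncurry fun (s : Fin k → Z) (f : F) =>
      ENNReal.ofReal (Real.exp (t * generalizationGap D ℓ f s))) :=
    (((measurable_generalizationGap D hℓ).comp measurable_swap).const_mul t).exp.ennreal_ofReal
  rw [lintegral_lintegral_swap hmeas.aemeasurable]
  calc ∫⁻ f, ∫⁻ s, ENNReal.ofReal (Real.exp (t * generalizationGap D ℓ f s))
          ∂(Measure.pi fun _ : Fin k => D) ∂P
      ≤ ∫⁻ _, ENNReal.ofReal (Real.exp (t ^ 2 * (b - a) ^ 2 / (8 * k))) ∂P :=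
        lintegral_mono fun f =>
          lintegral_exp_mul_sub_sampleMean_le D (hℓ.comp measurable_prodMk_left) (hab f) hk t
    _ = ENNReal.ofReal (Real.exp (t ^ 2 * (b - a) ^ 2 / (8 * k))) := by simp

end Tasks

lemma lintegral_fintype_prod_eq_prod {ι : Type*} [Fintype ι] {α : ι → Type*}
    [∀ i, MeasurableSpace (α i)] (μ : ∀ i, Measure (α i)) [∀ i, IsProbabilityMeasure (μ i)]
    {f : ∀ i, α i → ℝ≥0∞} (hf : ∀ i, Measurable (f i)) :
    ∫⁻ x, ∏ i, f i (x i) ∂Measure.pi μ = ∏ i, ∫⁻ y, f i y ∂μ i := by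
  rw [lintegral_prod_eq_prod_lintegral_of_indepFun _ _ (iIndepFun_pi fun i => (hf i).aemeasurable)
    fun i => (hf i).comp (measurable_pi_apply i)]
  exact Finset.prod_congr rfl fun i _ => (measurePreserving_eval μ i).lintegral_comp (hf i)

section GiryTonelli

variable {α β : Type*} [MeasurableSpace α] [MeasurableSpace β]

/-- `P ↦ (P univ)⁻¹ • P` fixes probability measures and, as `∞⁻¹ = 0` and `0⁻¹ • 0 = 0`, has
values of mass at most one: a finite kernel, through which `(x, P) ↦ ∫⁻ y, g x y ∂P` becomes
measurable on probability measures (the identity `Measure β → Measure β` is not an s-finite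
kernel). -/
def normalizeKernel (β : Type*) [MeasurableSpace β] : Kernel (Measure β) β where
  toFun P := P[|Set.univ]
  measurable' := by
    refine Measure.measurable_of_measurable_coe _ fun s hs => ?_
    simp only [cond_apply MeasurableSet.univ, Set.univ_inter]
    exact (Measure.measurable_coe MeasurableSet.univ).inv.mul (Measure.measurable_coe hs)

instance : IsFiniteKernel (normalizeKernel β) :=
  ⟨⟨1, ENNReal.one_lt_top, fun P => show P[|Set.univ] Set.univ ≤ 1 from prob_le_one⟩⟩

lemma measurable_lintegral_normalizeKernel {g : α → β → ℝ≥0∞}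
    (hg : Measurable (Function.uncurry g)) :
    Measurable fun p : α × Measure β => ∫⁻ y, g p.1 y ∂normalizeKernel β p.2 :=
  Measurable.lintegral_kernel_prod_right (κ := (normalizeKernel β).comap Prod.snd measurable_snd)
    (f := fun p y => g p.1 y) (hg.comp (measurable_fst.fst.prodMk measurable_snd))

lemma lintegral_lintegral_prod_lintegral_swap {ι : Type*} [Fintype ι]
    (μ : Measure α) [SFinite μ]
    (ρ : Measure (Measure β)) [SFinite ρ] (hρ : ∀ᵐ P ∂ρ, IsProbabilityMeasure P)
    {g : ι → α → β → ℝ≥0∞} (hg : ∀ i, Measurable (Function.uncurry (g i))) :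
    ∫⁻ x, ∫⁻ P, ∏ i, ∫⁻ y, g i x y ∂P ∂ρ ∂μ = ∫⁻ P, ∫⁻ x, ∏ i, ∫⁻ y, g i x y ∂P ∂μ ∂ρ := by
  have hnormalize : ∀ᵐ P ∂ρ, ∀ x,
      ∏ i, ∫⁻ y, g i x y ∂P = ∏ i, ∫⁻ y, g i x y ∂normalizeKernel β P :=
    hρ.mono fun P _ x => by simp [normalizeKernel]
  have hmeas : Measurable (Function.uncurry fun x P =>
      ∏ i, ∫⁻ y, g i x y ∂normalizeKernel β P) :=
    Finset.measurable_prod _ fun i _ => measurable_lintegral_normalizeKernel (hg i)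
  calc ∫⁻ x, ∫⁻ P, ∏ i, ∫⁻ y, g i x y ∂P ∂ρ ∂μ
      = ∫⁻ x, ∫⁻ P, ∏ i, ∫⁻ y, g i x y ∂normalizeKernel β P ∂ρ ∂μ :=
        lintegral_congr fun x => lintegral_congr_ae (hnormalize.mono fun P hP => hP x)
    _ = ∫⁻ P, ∫⁻ x, ∏ i, ∫⁻ y, g i x y ∂normalizeKernel β P ∂μ ∂ρ :=
        lintegral_lintegral_swap hmeas.aemeasurable
    _ = ∫⁻ P, ∫⁻ x, ∏ i, ∫⁻ y, g i x y ∂P ∂μ ∂ρ :=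
        lintegral_congr_ae (hnormalize.mono fun P hP => lintegral_congr fun x => (hP x).symm)

end GiryTonelli

theorem stmt16_general {F : Type*} [MeasurableSpace F] {n : ℕ}
    {Z : Fin n → Type*} [∀ i, MeasurableSpace (Z i)]
    (D : ∀ i, Measure (Z i)) [∀ i, IsProbabilityMeasure (D i)]
    (m : Fin n → ℕ) (hm : ∀ i, 0 < m i)
    (ℓ : ∀ i, F → Z i → ℝ)
    (hℓmeas : ∀ i, Measurable (Function.uncurry (ℓ i)))
    (hℓ01 : ∀ i f z, ℓ i f z ∈ Set.Icc (0 : ℝ) 1)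
    (Pri : Measure (Measure F)) [IsProbabilityMeasure Pri]
    (hPri : ∀ᵐ P ∂Pri, IsProbabilityMeasure P)
    (lam : ℝ) :
    (∫⁻ S, (∫⁻ P, ∏ i, ∫⁻ f, ENNReal.ofReal (Real.exp ((lam / n) *
          ((∫ z, ℓ i f z ∂(D i)) - (m i : ℝ)⁻¹ * ∑ j, ℓ i f (S i j)))) ∂P ∂Pri)
        ∂(Measure.pi fun i => Measure.pi fun _ : Fin (m i) => D i)) ≤
      ENNReal.ofReal (Real.exp (lam ^ 2 / (8 * n * ((n : ℝ) / ∑ i, (m i : ℝ)⁻¹)))) := by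
  set t := lam / n
  set G : ∀ i, (Fin (m i) → Z i) → F → ℝ≥0∞ := fun i s f =>
    ENNReal.ofReal (Real.exp (t * generalizationGap (D i) (ℓ i) f s))
  have hG : ∀ i, Measurable (Function.uncurry (G i)) := fun i =>
    (((measurable_generalizationGap (D i) (hℓmeas i)).comp measurable_swap).const_mul
      t).exp.ennreal_ofReal
  calc (∫⁻ S, ∫⁻ P, ∏ i, ∫⁻ f, G i (S i) f ∂P ∂Pri
        ∂(Measure.pi fun i => Measure.pi fun _ : Fin (m i) => D i))
      = ∫⁻ P, ∫⁻ S, ∏ i, ∫⁻ f, G i (S i) f ∂P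
          ∂(Measure.pi fun i => Measure.pi fun _ : Fin (m i) => D i) ∂Pri :=
        lintegral_lintegral_prod_lintegral_swap _ _ hPri
          fun i => (hG i).comp (f := fun p : (∀ i, Fin (m i) → Z i) × F => (p.1 i, p.2))
            (by fun_prop)
    _ ≤ ∫⁻ _, ∏ i, ENNReal.ofReal (Real.exp (t ^ 2 * (1 - 0) ^ 2 / (8 * m i))) ∂Pri := by
        refine lintegral_mono_ae (hPri.mono fun P hP => ?_)
        rw [lintegral_fintype_prod_eq_prod (f := fun i s => ∫⁻ f, G i s f ∂P) _
          fun i => (hG i).lintegral_prod_right']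
        exact Finset.prod_le_prod' fun i _ =>
          lintegral_lintegral_exp_mul_generalizationGap_le (D i) P (hℓmeas i) (hℓ01 i) (hm i) t
    _ = ENNReal.ofReal (Real.exp (lam ^ 2 / (8 * n * ((n : ℝ) / ∑ i, (m i : ℝ)⁻¹)))) := by
        rw [lintegral_const, measure_univ, mul_one,
          ← ENNReal.ofReal_prod_of_nonneg fun _ _ => (Real.exp_pos _).le, ← Real.exp_sum]
        congr 2
        simp only [t, div_eq_mul_inv, mul_inv, inv_inv, ← Finset.mul_sum]
        ring

theorem stmt16 {F : Type*} [MeasurableSpace F] {n : ℕ} (hn : 0 < n)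
    {Z : Fin n → Type*} [∀ i, MeasurableSpace (Z i)]
    (D : ∀ i, Measure (Z i)) [∀ i, IsProbabilityMeasure (D i)]
    (m : Fin n → ℕ) (hm : ∀ i, 0 < m i)
    (ℓ : ∀ i, F → Z i → ℝ)
    (hℓmeas : ∀ i, Measurable (Function.uncurry (ℓ i)))
    (hℓ01 : ∀ i f z, ℓ i f z ∈ Set.Icc (0 : ℝ) 1)
    (Pri : Measure (Measure F)) [IsProbabilityMeasure Pri]
    (hPri : ∀ᵐ P ∂Pri, IsProbabilityMeasure P)
    (lam : ℝ) (hlam : 0 < lam) :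
    (∫⁻ S, (∫⁻ P, ∏ i, ∫⁻ f, ENNReal.ofReal (Real.exp ((lam / n) *
          ((∫ z, ℓ i f z ∂(D i)) - (m i : ℝ)⁻¹ * ∑ j, ℓ i f (S i j)))) ∂P ∂Pri)
        ∂(Measure.pi fun i => Measure.pi fun _ : Fin (m i) => D i)) ≤
      ENNReal.ofReal (Real.exp (lam ^ 2 / (8 * n * ((n : ℝ) / ∑ i, (m i : ℝ)⁻¹)))) :=
  stmt16_general D m hm ℓ hℓmeas hℓ01 Pri hPri lam

end
end

section
/- Convex stochastic domination by the binomial (Berend–Kontorovich): Let X_1,…,X_t be independent random variables with P(0 ≤ X_i ≤ 1) = 1, let X = Σ_{i=1}^t X_i and μ = E[X], and let Y be a binomial random variable with distribution Y ∼ B(t, μ/t). Then for every convex function f : ℝ → ℝ, E[f(X)] ≤ E[f(Y)]. -/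
open MeasureTheory ProbabilityTheory
open scoped ENNReal NNReal Classical

noncomputable section

/-!
For fixed outcomes `x ∈ [0,1]ᵗ`, Jensen's inequality bounds `f (∑ xᵢ)` by `𝔼 f(N)`, where `N` counts
the successes of independent Bernoulli trials with parameters `xᵢ` (a Poisson binomial variable of
mean `∑ xᵢ`). This expectation is multi-affine in `x`, so by independence its mean over `X` is the
same expression at `pᵢ = 𝔼 Xᵢ`. Replacing two parameters by two others with the same sum and a
larger product changes `𝔼 F(N)` by the increase of the product times an expected second difference
of `F`, which is nonnegative for `F = f ∘ (↑)`. Finitely many such moves make every parameter equal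
to the mean `μ / t`, where `N ∼ B(t, μ / t)`.
-/

theorem ConvexOn.natCast_second_diff_nonneg {f : ℝ → ℝ} (hf : ConvexOn ℝ Set.univ f) (k : ℕ) :
    0 ≤ f k - 2 * f ↑(k + 1) + f ↑(k + 2) := by
  have h := hf.2 (Set.mem_univ (k : ℝ)) (Set.mem_univ ((k : ℝ) + 2))
    (by norm_num : (0 : ℝ) ≤ 1 / 2) (by norm_num : (0 : ℝ) ≤ 1 / 2) (by norm_num)
  have hmid : (1 / 2 : ℝ) • (k : ℝ) + (1 / 2 : ℝ) • ((k : ℝ) + 2) = ↑(k + 1) := by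
    push_cast; simp only [smul_eq_mul]; ring
  rw [hmid, smul_eq_mul, smul_eq_mul] at h
  push_cast at h ⊢
  linarith

theorem integral_binomR {p : ℝ} (hp : p ∈ Set.Icc (0 : ℝ) 1) (t : ℕ) (f : ℝ → ℝ) :
    ∫ y, f y ∂binomR t p =
      ∑ k ∈ Finset.range (t + 1), (t.choose k : ℝ) * p ^ k * (1 - p) ^ (t - k) * f k := by
  rw [binomR, integral_finsetSum_measure fun k _ =>
    (integrable_dirac (by simp)).smul_measure ENNReal.ofReal_ne_top]
  refine Finset.sum_congr rfl fun k _ => ?_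
  have hcoef : 0 ≤ (t.choose k : ℝ) * p ^ k * (1 - p) ^ (t - k) :=
    mul_nonneg (mul_nonneg (Nat.cast_nonneg _) (pow_nonneg hp.1 _))
      (pow_nonneg (sub_nonneg.2 hp.2) _)
  rw [integral_smul_measure, integral_dirac, ENNReal.toReal_ofReal hcoef, smul_eq_mul]

theorem integral_mem_Icc_of_ae_mem_Icc {Ω : Type*} [MeasurableSpace Ω] {μ : Measure Ω}
    [IsProbabilityMeasure μ] {Y : Ω → ℝ} {a b : ℝ} (hY : Integrable Y μ)
    (h : ∀ᵐ ω ∂μ, Y ω ∈ Set.Icc a b) : ∫ ω, Y ω ∂μ ∈ Set.Icc a b :=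
  ⟨by simpa using integral_mono_ae (integrable_const a) hY (h.mono fun _ hω => hω.1),
    by simpa using integral_mono_ae hY (integrable_const b) (h.mono fun _ hω => hω.2)⟩

theorem Continuous.integrable_comp_of_ae_mem_Icc {Ω : Type*} [MeasurableSpace Ω]
    {μ : Measure Ω} [IsFiniteMeasure μ] {f : ℝ → ℝ} (hf : Continuous f) {Y : Ω → ℝ}
    (hY : AEMeasurable Y μ) {a b : ℝ} (h : ∀ᵐ ω ∂μ, Y ω ∈ Set.Icc a b) :
    Integrable (fun ω => f (Y ω)) μ := by
  obtain ⟨C, hC⟩ := (isCompact_Icc (a := a) (b := b)).exists_bound_of_continuousOn hf.continuousOn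
  exact Integrable.of_bound (hf.comp_aestronglyMeasurable hY.aestronglyMeasurable) C
    (h.mono fun ω hω => hC _ hω)

theorem sum_mem_Icc_zero_card {ι : Type*} [Fintype ι] {x : ι → ℝ}
    (hx : ∀ i, x i ∈ Set.Icc (0 : ℝ) 1) : ∑ i, x i ∈ Set.Icc (0 : ℝ) (Fintype.card ι) :=
  ⟨Finset.sum_nonneg fun i _ => (hx i).1,
    by simpa using Finset.sum_le_sum fun i (_ : i ∈ Finset.univ) => (hx i).2⟩

theorem sum_div_card_mem_Icc {ι : Type*} [Fintype ι] {x : ι → ℝ}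
    (hx : ∀ i, x i ∈ Set.Icc (0 : ℝ) 1) :
    (∑ i, x i) / Fintype.card ι ∈ Set.Icc (0 : ℝ) 1 :=
  ⟨div_nonneg (sum_mem_Icc_zero_card hx).1 (Nat.cast_nonneg _),
    div_le_one_of_le₀ (sum_mem_Icc_zero_card hx).2 (Nat.cast_nonneg _)⟩

namespace PoissonBinomial

open Finset

variable {ι : Type*} [DecidableEq ι]

/-- The probability that, among independent Bernoulli trials with success probabilities `x i`
(`i ∈ s`), exactly those in `S` succeed. -/
def weight (s : Finset ι) (x : ι → ℝ) (S : Finset ι) : ℝ :=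
  ∏ i ∈ s, if i ∈ S then x i else 1 - x i

/-- `𝔼[F N]` for the number `N` of successes of these trials (Poisson binomial law). -/
def expect (s : Finset ι) (x : ι → ℝ) (F : ℕ → ℝ) : ℝ :=
  ∑ S ∈ s.powerset, weight s x S * F #S

lemma weight_nonneg {s : Finset ι} {x : ι → ℝ} (hx : ∀ i ∈ s, x i ∈ Set.Icc (0 : ℝ) 1)
    (S : Finset ι) : 0 ≤ weight s x S :=
  prod_nonneg fun i hi => by split_ifs <;> linarith [(hx i hi).1, (hx i hi).2]

lemma weight_le_one {s : Finset ι} {x : ι → ℝ} (hx : ∀ i ∈ s, x i ∈ Set.Icc (0 : ℝ) 1)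
    (S : Finset ι) : weight s x S ≤ 1 :=
  prod_le_one (fun i hi => by split_ifs <;> linarith [(hx i hi).1, (hx i hi).2])
    fun i hi => by split_ifs <;> linarith [(hx i hi).1, (hx i hi).2]

lemma expect_congr {s : Finset ι} {x y : ι → ℝ} (h : ∀ i ∈ s, x i = y i) (F : ℕ → ℝ) :
    expect s x F = expect s y F := by
  unfold expect weight
  exact sum_congr rfl fun S _ => by rw [prod_congr rfl fun i hi => by rw [h i hi]]

lemma expect_nonneg {s : Finset ι} {x : ι → ℝ} (hx : ∀ i ∈ s, x i ∈ Set.Icc (0 : ℝ) 1)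
    {F : ℕ → ℝ} (hF : ∀ k, 0 ≤ F k) : 0 ≤ expect s x F :=
  sum_nonneg fun S _ => mul_nonneg (weight_nonneg hx S) (hF _)

lemma expect_add (s : Finset ι) (x : ι → ℝ) (F G : ℕ → ℝ) :
    expect s x (fun k => F k + G k) = expect s x F + expect s x G := by
  simp only [expect, mul_add, sum_add_distrib]

lemma expect_insert {a : ι} {s : Finset ι} (ha : a ∉ s) (x : ι → ℝ) (F : ℕ → ℝ) :
    expect (insert a s) x F =
      (1 - x a) * expect s x F + x a * expect s x (fun k => F (k + 1)) := by
  rw [expect, sum_powerset_insert ha, expect, expect, mul_sum, mul_sum]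
  congr 1 <;> refine sum_congr rfl fun S hS => ?_
  · have haS : a ∉ S := fun h => ha (mem_powerset.1 hS h)
    rw [weight, prod_insert ha, if_neg haS, weight]
    ring
  · have haS : a ∉ S := fun h => ha (mem_powerset.1 hS h)
    have hoff : ∀ i ∈ s, (if i ∈ insert a S then x i else 1 - x i) =
        if i ∈ S then x i else 1 - x i := fun i hi => by
      simp only [mem_insert, ne_of_mem_of_not_mem hi ha, false_or]
    rw [weight, prod_insert ha, if_pos (mem_insert_self a S), prod_congr rfl hoff,
      card_insert_of_notMem haS, weight]
    ring

lemma expect_const (s : Finset ι) (x : ι → ℝ) (c : ℝ) : expect s x (fun _ => c) = c := by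
  induction s using Finset.induction_on with
  | empty => simp [expect, weight]
  | insert a s ha ih => rw [expect_insert ha, ih]; ring

lemma sum_weight (s : Finset ι) (x : ι → ℝ) : ∑ S ∈ s.powerset, weight s x S = 1 := by
  simpa [expect] using expect_const s x 1

lemma expect_natCast (s : Finset ι) (x : ι → ℝ) :
    expect s x (fun k => (k : ℝ)) = ∑ i ∈ s, x i := by
  induction s using Finset.induction_on with
  | empty => simp [expect, weight]
  | insert a s ha ih =>
    simp only [expect_insert ha, Nat.cast_add, Nat.cast_one, expect_add, expect_const, ih,
      sum_insert ha]
    ring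

/-- Jensen's inequality: the Poisson binomial law has mean `∑ i ∈ s, x i`. -/
theorem le_expect_of_convexOn {f : ℝ → ℝ} (hf : ConvexOn ℝ Set.univ f) {s : Finset ι}
    {x : ι → ℝ} (hx : ∀ i ∈ s, x i ∈ Set.Icc (0 : ℝ) 1) :
    f (∑ i ∈ s, x i) ≤ expect s x (fun k => f k) := by
  have h := hf.map_sum_le (t := s.powerset) (w := weight s x) (p := fun S => (#S : ℝ))
    (fun S _ => weight_nonneg hx S) (sum_weight s x) (fun _ _ => Set.mem_univ _)
  simpa only [smul_eq_mul, ← expect_natCast s x, expect] using h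

lemma expect_insert_insert {a b : ι} {s : Finset ι} (hab : a ≠ b) (ha : a ∉ s) (hb : b ∉ s)
    (x : ι → ℝ) (F : ℕ → ℝ) :
    expect (insert a (insert b s)) x F =
      expect s x F + (x a + x b) * expect s x (fun k => F (k + 1) - F k) +
        x a * x b * expect s x (fun k => F k - 2 * F (k + 1) + F (k + 2)) := by
  rw [expect_insert (by simp [hab, ha]), expect_insert hb, expect_insert hb]
  simp only [expect, mul_sum, ← sum_add_distrib]
  exact sum_congr rfl fun S _ => by ring

section Smoothing

variable [Fintype ι] {F : ℕ → ℝ}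

lemma expect_le_expect_of_eq_off_pair {i j : ι} (hij : i ≠ j) {x y : ι → ℝ}
    (hx : ∀ k, x k ∈ Set.Icc (0 : ℝ) 1) (hxy : ∀ k, k ≠ i → k ≠ j → x k = y k)
    (hsum : x i + x j = y i + y j) (hprod : x i * x j ≤ y i * y j)
    (hF : ∀ k, 0 ≤ F k - 2 * F (k + 1) + F (k + 2)) :
    expect univ x F ≤ expect univ y F := by
  set s := (univ.erase i).erase j
  have hj : j ∉ s := notMem_erase j _
  have hi : i ∉ s := fun h => notMem_erase i univ (mem_of_mem_erase h)
  have huniv : insert i (insert j s) = univ := by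
    rw [insert_erase (mem_erase.2 ⟨hij.symm, mem_univ j⟩), insert_erase (mem_univ i)]
  have hs : ∀ k ∈ s, x k = y k := fun k hk =>
    hxy k (ne_of_mem_of_not_mem hk hi) (ne_of_mem_of_not_mem hk hj)
  have hD : 0 ≤ expect s y (fun k => F k - 2 * F (k + 1) + F (k + 2)) :=
    expect_nonneg (fun k hk => hs k hk ▸ hx k) hF
  rw [← huniv, expect_insert_insert hij hi hj, expect_insert_insert hij hi hj,
    expect_congr hs, expect_congr hs, expect_congr hs, hsum]
  have := mul_le_mul_of_nonneg_right hprod hD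
  linarith

lemma exists_smoothing_step {m : ℝ} (hm : m ∈ Set.Icc (0 : ℝ) 1) {p : ι → ℝ}
    (hp : ∀ i, p i ∈ Set.Icc (0 : ℝ) 1) (hsum : ∑ i, p i = ∑ _i : ι, m)
    (hne : ¬ ∀ i, p i = m) (hF : ∀ k, 0 ≤ F k - 2 * F (k + 1) + F (k + 2)) :
    ∃ q : ι → ℝ, (∀ i, q i ∈ Set.Icc (0 : ℝ) 1) ∧ ∑ i, q i = ∑ i, p i ∧
      #{i | q i ≠ m} < #{i | p i ≠ m} ∧ expect univ p F ≤ expect univ q F := by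
  obtain ⟨i, hi⟩ : ∃ i, m < p i := by
    by_contra! h
    exact hne fun k => (sum_eq_sum_iff_of_le fun i _ => h i).1 hsum k (mem_univ k)
  obtain ⟨j, hj⟩ : ∃ j, p j < m := by
    by_contra! h
    exact hne fun k => ((sum_eq_sum_iff_of_le fun i _ => h i).1 hsum.symm k (mem_univ k)).symm
  have hij : i ≠ j := by rintro rfl; linarith
  set q : ι → ℝ := fun k => if k = i then m else if k = j then p i + p j - m else p k
  have hqi : q i = m := if_pos rfl
  have hqj : q j = p i + p j - m := by simp [q, hij.symm]
  have hqk : ∀ k, k ≠ i → k ≠ j → q k = p k := fun k hki hkj => by simp [q, hki, hkj]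
  refine ⟨q, fun k => ?_, ?_, ?_, ?_⟩
  · by_cases hki : k = i
    · rw [hki, hqi]; exact hm
    by_cases hkj : k = j
    · rw [hkj, hqj]; constructor <;> linarith [(hp i).2, (hp j).1]
    · rw [hqk k hki hkj]; exact hp k
  · have := Fintype.sum_eq_add i j hij (f := fun k => q k - p k) fun k ⟨hki, hkj⟩ => by
      simp [hqk k hki hkj]
    rw [sum_sub_distrib, hqi, hqj] at this
    linarith
  · refine card_lt_card ((ssubset_iff_of_subset fun k => ?_).2 ⟨i, ?_, ?_⟩)
    · simp only [mem_filter, mem_univ, true_and]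
      intro hk
      by_cases hkj : k = j
      · rw [hkj]; exact hj.ne
      · rwa [← hqk k (by rintro rfl; exact hk hqi) hkj]
    · simp [hi.ne']
    · simp [hqi]
  · exact expect_le_expect_of_eq_off_pair hij hp (fun k hki hkj => (hqk k hki hkj).symm)
      (by rw [hqi, hqj]; ring) (by rw [hqi, hqj]; nlinarith) hF

theorem expect_le_expect_const {m : ℝ} (hm : m ∈ Set.Icc (0 : ℝ) 1) {p : ι → ℝ}
    (hp : ∀ i, p i ∈ Set.Icc (0 : ℝ) 1) (hsum : ∑ i, p i = ∑ _i : ι, m)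
    (hF : ∀ k, 0 ≤ F k - 2 * F (k + 1) + F (k + 2)) :
    expect univ p F ≤ expect univ (fun _ : ι => m) F := by
  induction hn : #{i | p i ≠ m} using Nat.strong_induction_on generalizing p with
  | _ n ih =>
    by_cases hne : ∀ i, p i = m
    · exact (expect_congr (fun i _ => hne i) F).le
    obtain ⟨q, hq, hqsum, hlt, hpq⟩ := exists_smoothing_step hm hp hsum hne hF
    exact hpq.trans (ih _ (hn ▸ hlt) hq (hqsum.trans hsum) rfl)

theorem expect_le_expect_average {p : ι → ℝ} (hp : ∀ i, p i ∈ Set.Icc (0 : ℝ) 1)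
    (hF : ∀ k, 0 ≤ F k - 2 * F (k + 1) + F (k + 2)) :
    expect univ p F ≤ expect univ (fun _ : ι => (∑ i, p i) / Fintype.card ι) F := by
  refine expect_le_expect_const (sum_div_card_mem_Icc hp) hp ?_ hF
  rw [sum_const, card_univ, nsmul_eq_mul]
  rcases isEmpty_or_nonempty ι with _ | _
  · simp
  · field_simp

theorem expect_const_eq_sum_choose (m : ℝ) (F : ℕ → ℝ) :
    expect univ (fun _ : ι => m) F = ∑ k ∈ range (Fintype.card ι + 1),
      (Fintype.card ι).choose k * m ^ k * (1 - m) ^ (Fintype.card ι - k) * F k := by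
  have hweight (S : Finset ι) :
      weight univ (fun _ => m) S = m ^ #S * (1 - m) ^ (Fintype.card ι - #S) := by
    simp [weight, prod_ite, filter_notMem_eq_sdiff, ← compl_eq_univ_sdiff, card_compl]
  simp only [expect, hweight]
  rw [sum_powerset_apply_card (fun k => m ^ k * (1 - m) ^ (Fintype.card ι - k) * F k), card_univ]
  exact sum_congr rfl fun k _ => by rw [nsmul_eq_mul]; ring

end Smoothing

section Probability

variable {Ω : Type*} [Fintype ι] [MeasurableSpace Ω] {μ : Measure Ω} {X : ι → Ω → ℝ}

lemma integrable_weight [IsFiniteMeasure μ] (hX : ∀ i, Measurable (X i))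
    (hbdd : ∀ i, ∀ᵐ ω ∂μ, X i ω ∈ Set.Icc (0 : ℝ) 1) (S : Finset ι) :
    Integrable (fun ω => weight univ (X · ω) S) μ := by
  have hmeas : Measurable fun ω => weight univ (X · ω) S :=
    Finset.measurable_prod _ fun i _ => by
      split_ifs
      exacts [hX i, measurable_const.sub (hX i)]
  exact Integrable.of_mem_Icc 0 1 hmeas.aemeasurable ((ae_all_iff.2 hbdd).mono fun ω hω =>
    ⟨weight_nonneg (fun i _ => hω i) S, weight_le_one (fun i _ => hω i) S⟩)

lemma integral_weight (hindep : iIndepFun X μ) (hint : ∀ i, Integrable (X i) μ)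
    (S : Finset ι) :
    ∫ ω, weight univ (X · ω) S ∂μ = weight univ (fun i => ∫ ω, X i ω ∂μ) S := by
  have := hindep.isProbabilityMeasure
  have hfactor (i : ι) : Measurable fun y : ℝ => if i ∈ S then y else 1 - y := by
    split_ifs
    exacts [measurable_id, measurable_const.sub measurable_id]
  unfold weight
  rw [hindep.integral_fun_prod_comp (fun i => (hint i).aemeasurable)
    fun i => (hfactor i).aestronglyMeasurable]
  refine prod_congr rfl fun i _ => ?_
  split_ifs
  · rfl
  · rw [integral_sub (integrable_const 1) (hint i)]
    simp

theorem integral_expect (hX : ∀ i, Measurable (X i)) (hindep : iIndepFun X μ)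
    (hbdd : ∀ i, ∀ᵐ ω ∂μ, X i ω ∈ Set.Icc (0 : ℝ) 1) (F : ℕ → ℝ) :
    ∫ ω, expect univ (X · ω) F ∂μ = expect univ (fun i => ∫ ω, X i ω ∂μ) F := by
  have := hindep.isProbabilityMeasure
  have hint (i : ι) : Integrable (X i) μ :=
    Integrable.of_mem_Icc 0 1 (hX i).aemeasurable (hbdd i)
  unfold expect
  rw [integral_finsetSum _ fun S _ => (integrable_weight hX hbdd S).mul_const _]
  exact sum_congr rfl fun S _ => by rw [integral_mul_const, integral_weight hindep hint S]

theorem integral_comp_sum_le_expect {f : ℝ → ℝ} (hf : ConvexOn ℝ Set.univ f)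
    (hX : ∀ i, Measurable (X i)) (hindep : iIndepFun X μ)
    (hbdd : ∀ i, ∀ᵐ ω ∂μ, X i ω ∈ Set.Icc (0 : ℝ) 1) :
    ∫ ω, f (∑ i, X i ω) ∂μ ≤ expect univ (fun i => ∫ ω, X i ω ∂μ) (fun k => f k) := by
  have := hindep.isProbabilityMeasure
  have hbdd' : ∀ᵐ ω ∂μ, ∀ i, X i ω ∈ Set.Icc (0 : ℝ) 1 := ae_all_iff.2 hbdd
  rw [← integral_expect hX hindep hbdd]
  refine integral_mono_ae ?_ ?_ (hbdd'.mono fun ω hω => le_expect_of_convexOn hf fun i _ => hω i)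
  · exact (continuousOn_univ.1 (hf.continuousOn isOpen_univ)).integrable_comp_of_ae_mem_Icc
      (Finset.measurable_sum _ fun i _ => hX i).aemeasurable
      (hbdd'.mono fun _ hω => sum_mem_Icc_zero_card hω)
  · exact integrable_finsetSum _ fun S _ => (integrable_weight hX hbdd S).mul_const _

end Probability

end PoissonBinomial

theorem stmt17_general {Ω : Type*} [MeasurableSpace Ω] (μP : Measure Ω)
    {t : ℕ} (X : Fin t → Ω → ℝ) (hXmeas : ∀ i, Measurable (X i))
    (hindep : iIndepFun X μP)
    (hbdd : ∀ i, ∀ᵐ ω ∂μP, X i ω ∈ Set.Icc (0 : ℝ) 1)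
    (f : ℝ → ℝ) (hf : ConvexOn ℝ Set.univ f) :
    (∫ ω, f (∑ i, X i ω) ∂μP) ≤
      ∫ y, f y ∂(binomR t ((∫ ω, (∑ i, X i ω) ∂μP) / t)) := by
  have := hindep.isProbabilityMeasure
  have hint (i : Fin t) : Integrable (X i) μP :=
    Integrable.of_mem_Icc 0 1 (hXmeas i).aemeasurable (hbdd i)
  set p : Fin t → ℝ := fun i => ∫ ω, X i ω ∂μP
  have hp (i : Fin t) : p i ∈ Set.Icc (0 : ℝ) 1 :=
    integral_mem_Icc_of_ae_mem_Icc (hint i) (hbdd i)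
  have hmean : ∫ ω, ∑ i, X i ω ∂μP = ∑ i, p i := integral_finsetSum _ fun i _ => hint i
  have hm := sum_div_card_mem_Icc hp
  rw [Fintype.card_fin] at hm
  calc ∫ ω, f (∑ i, X i ω) ∂μP
      ≤ PoissonBinomial.expect Finset.univ p (fun k => f k) :=
        PoissonBinomial.integral_comp_sum_le_expect hf hXmeas hindep hbdd
    _ ≤ PoissonBinomial.expect Finset.univ (fun _ => (∑ i, p i) / Fintype.card (Fin t))
          (fun k => f k) :=
        PoissonBinomial.expect_le_expect_average hp hf.natCast_second_diff_nonneg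
    _ = ∫ y, f y ∂(binomR t ((∫ ω, (∑ i, X i ω) ∂μP) / t)) := by
        rw [PoissonBinomial.expect_const_eq_sum_choose, hmean, Fintype.card_fin,
          integral_binomR hm]

theorem stmt17 {Ω : Type*} [MeasurableSpace Ω] (μP : Measure Ω) [IsProbabilityMeasure μP]
    {t : ℕ} (ht : 0 < t) (X : Fin t → Ω → ℝ) (hXmeas : ∀ i, Measurable (X i))
    (hindep : iIndepFun X μP)
    (hbdd : ∀ i, ∀ᵐ ω ∂μP, X i ω ∈ Set.Icc (0 : ℝ) 1)
    (f : ℝ → ℝ) (hf : ConvexOn ℝ Set.univ f) :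
    (∫ ω, f (∑ i, X i ω) ∂μP) ≤
      ∫ y, f y ∂(binomR t ((∫ ω, (∑ i, X i ω) ∂μP) / t)) :=
  stmt17_general μP X hXmeas hindep hbdd f hf

end
end

section
/- Maurer's binomial kl moment bound: Let 0 ≤ μ ≤ t and let Y be a binomial random variable with distribution Y ∼ B(t, μ/t). Then E[ exp( t · kl( Y/t | μ/t ) ) ] ≤ 2 √t. -/
open MeasureTheory ProbabilityTheory
open scoped ENNReal NNReal Classical

noncomputable section

/-!
For `0 < p < 1` and `q = k / t`, the identity
`t · kl(q|p) = log (q^k (1-q)^(t-k) / (p^k (1-p)^(t-k)))` makes the expectation equal to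
`∑ₖ C(t,k) (k/t)^k (1 - k/t)^(t-k)`, whatever `p` is (for `p ∈ {0, 1}` it is at most that sum).
The terms `k = 0` and `k = t` equal `1`. By Stirling's bounds
`√(2πn) (n/e)^n ≤ n! ≤ e √n (n/e)^n` every other term is at most `e √t / (2π √(k(t-k)))`, and
since `1/√(x(t-x))` is the derivative of `arcsin (2x/t - 1)`, decreasing on `(0, t/2]` and
symmetric under `x ↦ t - x`, we get `∑_{0<k<t} 1/√(k(t-k)) ≤ π`. The sum is therefore at most
`2 + e √t / 2 ≤ 2 √t` once `t ≥ 10`; the cases `t < 10` are checked numerically.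
-/

open Real Finset
open scoped Nat

lemma factorial_le_exp_one_mul_sqrt_mul_pow {n : ℕ} (hn : n ≠ 0) :
    (n ! : ℝ) ≤ exp 1 * √n * (n / exp 1) ^ n := by
  obtain ⟨m, rfl⟩ : ∃ m, n = m + 1 := ⟨n - 1, by omega⟩
  have h := Stirling.stirlingSeq'_antitone (Nat.zero_le m)
  simp only [Function.comp_apply, Nat.succ_eq_add_one, zero_add, Stirling.stirlingSeq_one] at h
  rw [Stirling.stirlingSeq, div_le_div_iff₀ (by positivity) (by positivity),
    Real.sqrt_mul zero_le_two] at h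
  exact le_of_mul_le_mul_right (h.trans_eq (by ring)) (by positivity)

lemma add_choose_mul_div_pow_le {n m : ℕ} (hn : n ≠ 0) (hm : m ≠ 0) :
    ((n + m).choose n : ℝ) * (n / (n + m)) ^ n * (m / (n + m)) ^ m ≤
      exp 1 * √(n + m) / (2 * π * √(n * m)) := by
  have hfac : ((n + m).choose n : ℝ) * n ! * m ! = (n + m)! := by
    have := Nat.add_choose_mul_factorial_mul_factorial n m
    rw [← Nat.choose_symm_add] at this
    exact_mod_cast this
  have hup := factorial_le_exp_one_mul_sqrt_mul_pow (n := n + m) (by omega)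
  have hn' := Stirling.le_factorial_stirling n
  have hm' := Stirling.le_factorial_stirling m
  push_cast at hup
  have hsqrt : √(2 * π * n) * √(2 * π * m) = 2 * π * √(n * m) := by
    rw [← Real.sqrt_mul (by positivity),
      show 2 * π * n * (2 * π * m) = (2 * π) ^ 2 * (n * m) by ring,
      Real.sqrt_mul (by positivity), Real.sqrt_sq (by positivity)]
  have hpow : ((n : ℝ) / (n + m)) ^ n * (m / (n + m)) ^ m * ((n + m) / exp 1) ^ (n + m) =
      (n / exp 1) ^ n * (m / exp 1) ^ m := by
    have : (n : ℝ) + m ≠ 0 := by positivity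
    rw [pow_add, mul_mul_mul_comm, ← mul_pow, ← mul_pow]
    congr 2 <;> field_simp
  rw [le_div_iff₀ (by positivity)]
  have hpos : 0 < ((n + m : ℝ) / exp 1) ^ (n + m) := by positivity
  refine le_of_mul_le_mul_right ?_ hpos
  calc _ = (n + m).choose n * (√(2 * π * n) * (n / exp 1) ^ n) *
          (√(2 * π * m) * (m / exp 1) ^ m) := by
        rw [← hsqrt]
        linear_combination ((n + m).choose n * √(2 * π * n) * √(2 * π * m) : ℝ) * hpow
    _ ≤ (n + m).choose n * n ! * m ! := by gcongr
    _ ≤ _ := by rw [hfac]; exact hup.trans_eq (by ring)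

lemma hasDerivAt_arcsin_two_mul_div_sub_one {t x : ℝ} (hx : 0 < x) (hxt : x < t) :
    HasDerivAt (fun y => arcsin (2 * y / t - 1)) (√(x * (t - x)))⁻¹ x := by
  have ht : 0 < t := hx.trans hxt
  have hinner : HasDerivAt (fun y : ℝ => 2 * y / t - 1) (2 / t) x := by
    simpa using (((hasDerivAt_id x).const_mul 2).div_const t).sub_const 1
  have h1 : 2 * x / t - 1 ≠ -1 := by
    have : 0 < 2 * x / t := by positivity
    linarith
  have h2 : 2 * x / t - 1 ≠ 1 := by
    have : 2 * x / t < 2 := by rw [div_lt_iff₀ ht]; linarith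
    linarith
  have hsqrt : √(1 - (2 * x / t - 1) ^ 2) = 2 / t * √(x * (t - x)) := by
    rw [show 1 - (2 * x / t - 1) ^ 2 = (2 / t) ^ 2 * (x * (t - x)) by field_simp; ring,
      Real.sqrt_mul (by positivity), Real.sqrt_sq (by positivity)]
  refine ((hasDerivAt_arcsin h1 h2).comp x hinner).congr_deriv ?_
  have : 0 < √(x * (t - x)) := Real.sqrt_pos.mpr (by nlinarith)
  rw [hsqrt]
  field_simp

lemma inv_sqrt_mul_sub_antitoneOn (t : ℝ) :
    AntitoneOn (fun x => (√(x * (t - x)))⁻¹) (Set.Ioc 0 (t / 2)) := by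
  intro a ha b hb hab
  have : 0 < a * (t - a) := by nlinarith [ha.1, ha.2]
  exact inv_anti₀ (Real.sqrt_pos.mpr this) (Real.sqrt_le_sqrt (by nlinarith [ha.1, hb.2]))

lemma inv_sqrt_mul_sub_le_arcsin_sub {t x : ℝ} (hx : 1 ≤ x) (hxt : 2 * x ≤ t) :
    (√(x * (t - x)))⁻¹ ≤ arcsin (2 * x / t - 1) - arcsin (2 * (x - 1) / t - 1) := by
  have hcont : ContinuousOn (fun y => arcsin (2 * y / t - 1)) (Set.Icc (x - 1) x) := by fun_prop
  obtain ⟨c, hc, hslope⟩ := exists_hasDerivAt_eq_slope _ _ (by linarith : x - 1 < x) hcont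
    fun y hy => hasDerivAt_arcsin_two_mul_div_sub_one (by linarith [hy.1]) (by linarith [hy.2])
  simp only [sub_sub_cancel, div_one] at hslope
  rw [← hslope]
  exact inv_sqrt_mul_sub_antitoneOn t ⟨by linarith [hc.1], by linarith [hc.2]⟩
    ⟨by linarith, by linarith⟩ hc.2.le

lemma sum_Icc_inv_sqrt_mul_sub_le_pi_div_two {t : ℝ} {m : ℕ} (hm : 2 * m ≤ t) :
    ∑ k ∈ Icc 1 m, (√(k * (t - k)))⁻¹ ≤ π / 2 := by
  have htelescope : ∀ n : ℕ, 2 * n ≤ t →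
      ∑ k ∈ Icc 1 n, (√(k * (t - k)))⁻¹ ≤ arcsin (2 * n / t - 1) + π / 2 := by
    intro n
    induction n with
    | zero => simp
    | succ n ih =>
      intro hn
      push_cast at hn
      rw [Finset.sum_Icc_succ_top (by omega)]
      have hstep := inv_sqrt_mul_sub_le_arcsin_sub (t := t) (x := n + 1) (by simp) (by linarith)
      push_cast
      simp only [add_sub_cancel_right] at hstep
      linarith [ih (by linarith)]
  refine (htelescope m hm).trans ?_
  have : arcsin (2 * m / t - 1) ≤ 0 := by
    rw [Real.arcsin_nonpos, sub_nonpos]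
    exact div_le_one_of_le₀ hm (by linarith [(by positivity : (0:ℝ) ≤ 2 * m)])
  linarith

lemma sum_Ioo_inv_sqrt_mul_sub_le_pi (t : ℕ) :
    ∑ k ∈ Ioo 0 t, (√((k : ℝ) * (t - k)))⁻¹ ≤ π := by
  set f : ℕ → ℝ := fun k => (√((k : ℝ) * (t - k)))⁻¹
  have hhalf : ∑ k ∈ Icc 1 (t / 2), f k ≤ π / 2 :=
    sum_Icc_inv_sqrt_mul_sub_le_pi_div_two (by exact_mod_cast Nat.mul_div_le t 2)
  have hf : ∀ k, 0 ≤ f k := fun k => by positivity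
  rw [← sum_filter_add_sum_filter_not _ (fun k => 2 * k ≤ t)]
  have hlow : ∑ k ∈ (Ioo 0 t).filter (fun k => 2 * k ≤ t), f k ≤ π / 2 := by
    refine le_trans (sum_le_sum_of_subset_of_nonneg ?_ fun k _ _ => hf k) hhalf
    intro k hk
    simp only [mem_filter, mem_Ioo, mem_Icc] at hk ⊢
    omega
  have hhigh : ∑ k ∈ (Ioo 0 t).filter (fun k => ¬ 2 * k ≤ t), f k ≤ π / 2 := by
    have hreflect : ∀ k ∈ (Ioo 0 t).filter (fun k => ¬ 2 * k ≤ t), f k = f (t - k) := by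
      intro k hk
      simp only [mem_filter, mem_Ioo] at hk
      simp only [f, Nat.cast_sub hk.1.2.le, sub_sub_cancel, mul_comm]
    rw [sum_congr rfl hreflect, ← sum_image (g := (t - ·)) (fun a ha b hb hab => by
      simp only [coe_filter, mem_Ioo, Set.mem_ofPred_eq] at ha hb hab
      omega)]
    refine le_trans (sum_le_sum_of_subset_of_nonneg ?_ fun k _ _ => hf k) hhalf
    intro k hk
    simp only [mem_image, mem_filter, mem_Ioo, mem_Icc] at hk ⊢
    omega
  linarith

def binomWeight (t : ℕ) (p : ℝ) (k : ℕ) : ℝ := t.choose k * p ^ k * (1 - p) ^ (t - k)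

lemma binomWeight_nonneg (t k : ℕ) {p : ℝ} (hp : p ∈ Set.Icc 0 1) : 0 ≤ binomWeight t p k := by
  have := hp.1
  have : 0 ≤ 1 - p := by linarith [hp.2]
  unfold binomWeight
  positivity

lemma div_mem_Icc_of_le {t k : ℕ} (hk : k ≤ t) :
    (k / t : ℝ) ∈ Set.Icc 0 1 :=
  ⟨by positivity, div_le_one_of_le₀ (by exact_mod_cast hk) (Nat.cast_nonneg t)⟩

lemma binomWeight_div_le {t k : ℕ} (hk : k ≠ 0) (hkt : k < t) :
    binomWeight t (k / t) k ≤ exp 1 * √t / (2 * π) * (√(k * (t - k)))⁻¹ := by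
  obtain ⟨m, rfl⟩ := Nat.exists_eq_add_of_le hkt.le
  have hm : m ≠ 0 := by omega
  have hpos : (0 : ℝ) < k + m := by positivity
  have h1 : 1 - (k : ℝ) / (k + m) = m / (k + m) := by field_simp; ring
  simp only [binomWeight, Nat.add_sub_cancel_left]
  push_cast
  rw [h1, add_sub_cancel_left]
  refine (add_choose_mul_div_pow_le hk hm).trans_eq ?_
  field_simp

lemma sum_binomWeight_div_le_of_lt_ten {t : ℕ} (ht : t ≠ 0) (ht10 : t < 10) :
    ∑ k ∈ range (t + 1), binomWeight t (k / t) k ≤ 2 * √t := by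
  have : 0 < t := Nat.pos_of_ne_zero ht
  rw [show 2 * √(t : ℝ) = √(4 * t) by
    rw [Real.sqrt_mul zero_le_four, show (4 : ℝ) = 2 ^ 2 by norm_num, Real.sqrt_sq zero_le_two]]
  rw [Real.le_sqrt (sum_nonneg fun k hk => ?_) (by positivity)]
  · interval_cases t <;> norm_num [binomWeight, sum_range_succ, Nat.choose]
  · exact binomWeight_nonneg t k (div_mem_Icc_of_le (Nat.lt_succ_iff.mp (mem_range.mp hk)))

lemma sum_binomWeight_div_le_of_ten_le {t : ℕ} (ht : 10 ≤ t) :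
    ∑ k ∈ range (t + 1), binomWeight t (k / t) k ≤ 2 * √t := by
  have htpos : (0 : ℝ) < t := by exact_mod_cast (by omega : 0 < t)
  have hends : binomWeight t ((0 : ℕ) / t) 0 = 1 ∧ binomWeight t (t / t) t = 1 := by
    simp [binomWeight, div_self htpos.ne']
  have hmiddle : ∑ k ∈ Ioo 0 t, binomWeight t (k / t) k ≤ exp 1 * √t / 2 :=
    calc ∑ k ∈ Ioo 0 t, binomWeight t (k / t) k
        ≤ ∑ k ∈ Ioo 0 t, exp 1 * √t / (2 * π) * (√(k * (t - k)))⁻¹ :=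
          sum_le_sum fun k hk => binomWeight_div_le (mem_Ioo.mp hk).1.ne' (mem_Ioo.mp hk).2
      _ ≤ exp 1 * √t / (2 * π) * π := by
          rw [← mul_sum]; gcongr; exact sum_Ioo_inv_sqrt_mul_sub_le_pi t
      _ = exp 1 * √t / 2 := by field_simp
  have ht' : (10 : ℝ) ≤ t := by exact_mod_cast ht
  have hsqrt : (3.16 : ℝ) ≤ √t := Real.le_sqrt_of_sq_le (by linarith)
  have he : exp 1 * √t ≤ 2.72 * √t := by gcongr; linarith [Real.exp_one_lt_d9]
  rw [sum_range_succ, range_eq_Ico, sum_eq_sum_Ico_succ_bot (by omega), Ico_add_one_left_eq_Ioo]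
  linarith [hends.1, hends.2]

lemma sum_binomWeight_div_le {t : ℕ} (ht : t ≠ 0) :
    ∑ k ∈ range (t + 1), binomWeight t (k / t) k ≤ 2 * √t := by
  rcases lt_or_ge t 10 with ht10 | ht10
  · exact sum_binomWeight_div_le_of_lt_ten ht ht10
  · exact sum_binomWeight_div_le_of_ten_le ht10

lemma lintegral_binomR (t : ℕ) (p : ℝ) (f : ℝ → ℝ≥0∞) :
    ∫⁻ y, f y ∂binomR t p = ∑ k ∈ range (t + 1), ENNReal.ofReal (binomWeight t p k) * f k := by
  simp only [binomR, lintegral_finsetSum_measure, lintegral_smul_measure, lintegral_dirac,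
    smul_eq_mul, binomWeight]

lemma klReal_eq_mul_klFun_add_mul_klFun {q p : ℝ} (hp0 : 0 < p) (hp1 : p < 1) :
    klReal q p = p * InformationTheory.klFun (q / p) +
      (1 - p) * InformationTheory.klFun ((1 - q) / (1 - p)) := by
  have : 1 - p ≠ 0 := by linarith
  simp only [klReal, InformationTheory.klFun]
  field_simp
  ring

lemma klReal_nonneg {q p : ℝ} (hq0 : 0 ≤ q) (hq1 : q ≤ 1) (hp0 : 0 < p) (hp1 : p < 1) :
    0 ≤ klReal q p := by
  rw [klReal_eq_mul_klFun_add_mul_klFun hp0 hp1]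
  have h1 : 0 ≤ 1 - p := by linarith
  have h2 : 0 ≤ 1 - q := by linarith
  have := InformationTheory.klFun_nonneg (div_nonneg hq0 hp0.le)
  have := InformationTheory.klFun_nonneg (div_nonneg h2 h1)
  positivity

lemma pow_mul_exp_nat_mul_log_div {p q : ℝ} (hp : 0 < p) {n : ℕ} (hq : 0 < q ∨ n = 0) :
    p ^ n * exp (n * log (q / p)) = q ^ n := by
  obtain hq | rfl := hq
  · rw [Real.exp_nat_mul, Real.exp_log (by positivity), ← mul_pow, mul_div_cancel₀ _ hp.ne']
  · simp

lemma binomWeight_mul_exp_klReal {t k : ℕ} (hkt : k ≤ t) {p : ℝ} (hp0 : 0 < p) (hp1 : p < 1) :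
    binomWeight t p k * exp (t * klReal (k / t) p) = binomWeight t (k / t) k := by
  rcases Nat.eq_zero_or_pos t with rfl | ht
  · simp [binomWeight, Nat.le_zero.mp hkt]
  have htR : (t : ℝ) ≠ 0 := by positivity
  have hsplit : (t : ℝ) * klReal (k / t) p =
      k * log ((k / t) / p) + ((t - k : ℕ) : ℝ) * log ((1 - k / t) / (1 - p)) := by
    rw [Nat.cast_sub hkt, klReal]
    field_simp
  have hq : 0 < (k : ℝ) / t ∨ k = 0 := by
    rcases Nat.eq_zero_or_pos k with h | h
    · exact Or.inr h
    · exact Or.inl (by positivity)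
  have hq' : 0 < 1 - (k : ℝ) / t ∨ t - k = 0 := by
    rcases Nat.eq_zero_or_pos (t - k) with h | h
    · exact Or.inr h
    · left
      rw [sub_pos, div_lt_one (by positivity)]
      exact_mod_cast (by omega : k < t)
  rw [hsplit, Real.exp_add]
  calc binomWeight t p k * (exp (k * log ((k / t) / p)) *
          exp (((t - k : ℕ) : ℝ) * log ((1 - k / t) / (1 - p))))
      = t.choose k * (p ^ k * exp (k * log ((k / t) / p))) *
          ((1 - p) ^ (t - k) * exp (((t - k : ℕ) : ℝ) * log ((1 - k / t) / (1 - p)))) := by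
        unfold binomWeight; ring
    _ = binomWeight t (k / t) k := by
        rw [pow_mul_exp_nat_mul_log_div hp0 hq, pow_mul_exp_nat_mul_log_div (by linarith) hq',
          binomWeight, mul_assoc]

lemma expENN_mul_klBin_of_mem_Ioo {t : ℕ} {q p : ℝ} (hq : q ∈ Set.Icc 0 1) (hp : p ∈ Set.Ioo 0 1) :
    expENN (t * klBin q p) = ENNReal.ofReal (exp (t * klReal q p)) := by
  have hkl : klBin q p = ENNReal.ofReal (klReal q p) := by
    rw [klBin, if_neg (by rintro (⟨h, -⟩ | ⟨h, -⟩) <;> linarith [hp.1, hp.2]), klReal]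
  rw [hkl, ← ENNReal.ofReal_natCast, ← ENNReal.ofReal_mul (Nat.cast_nonneg t), expENN,
    if_neg ENNReal.ofReal_ne_top,
    ENNReal.toReal_ofReal (mul_nonneg (Nat.cast_nonneg t) (klReal_nonneg hq.1 hq.2 hp.1 hp.2))]

lemma ofReal_binomWeight_mul_expENN_klBin_le {t k : ℕ} (ht : t ≠ 0) (hkt : k ≤ t) {p : ℝ}
    (hp : p ∈ Set.Icc 0 1) :
    ENNReal.ofReal (binomWeight t p k) * expENN (t * klBin (k / t) p) ≤
      ENNReal.ofReal (binomWeight t (k / t) k) := by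
  obtain ⟨hp0, hp1⟩ := hp
  rcases hp0.eq_or_lt with rfl | hp0
  · rcases Nat.eq_zero_or_pos k with rfl | hk
    · simp [binomWeight, klBin, expENN]
    · simp [binomWeight, zero_pow hk.ne']
  rcases hp1.eq_or_lt with rfl | hp1
  · rcases hkt.eq_or_lt with rfl | hk
    · simp [binomWeight, klBin, expENN, ht]
    · simp [binomWeight, zero_pow (Nat.sub_ne_zero_of_lt hk)]
  rw [expENN_mul_klBin_of_mem_Ioo (div_mem_Icc_of_le hkt) ⟨hp0, hp1⟩,
    ← ENNReal.ofReal_mul (binomWeight_nonneg t k ⟨hp0.le, hp1.le⟩),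
    binomWeight_mul_exp_klReal hkt hp0 hp1]

theorem stmt18 {t : ℕ} (ht : 0 < t) (μ : ℝ) (hμ0 : 0 ≤ μ) (hμt : μ ≤ t) :
    (∫⁻ y, expENN ((t : ℝ≥0∞) * klBin (y / t) (μ / t)) ∂(binomR t (μ / t))) ≤
      ENNReal.ofReal (2 * Real.sqrt t) := by
  have hp : μ / t ∈ Set.Icc 0 1 :=
    ⟨div_nonneg hμ0 (Nat.cast_nonneg t), div_le_one_of_le₀ hμt (Nat.cast_nonneg t)⟩
  have hle : ∀ k ∈ range (t + 1), k ≤ t := fun k hk => Nat.lt_succ_iff.mp (mem_range.mp hk)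
  calc ∫⁻ y, expENN (t * klBin (y / t) (μ / t)) ∂binomR t (μ / t)
      = ∑ k ∈ range (t + 1),
          ENNReal.ofReal (binomWeight t (μ / t) k) * expENN (t * klBin (k / t) (μ / t)) :=
        lintegral_binomR t (μ / t) _
    _ ≤ ∑ k ∈ range (t + 1), ENNReal.ofReal (binomWeight t (k / t) k) :=
        sum_le_sum fun k hkt => ofReal_binomWeight_mul_expENN_klBin_le ht.ne' (hle k hkt) hp
    _ = ENNReal.ofReal (∑ k ∈ range (t + 1), binomWeight t (k / t) k) :=
        (ENNReal.ofReal_sum_of_nonneg fun k hkt =>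
          binomWeight_nonneg t k (div_mem_Icc_of_le (hle k hkt))).symm
    _ ≤ ENNReal.ofReal (2 * Real.sqrt t) :=
        ENNReal.ofReal_le_ofReal (sum_binomWeight_div_le ht.ne')

end
end
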